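/- arXiv:1007.4154 — 5 statements merged into one kernel-verified Lean document; each statement's English description precedes it below -/
import Mathlib

section
/- Let G_n be the toroidal mesh of size n with the majority coloring process of threshold 2. If p = p(n) satisfies 0 ≤ p(n) ≤ 0.012/ln(n) for all sufficiently large n, then the probability (under the product Bernoulli(p(n)) measure) that the random seed set S^p is a dynamo on G_n tends to 0 as n → ∞. -/
open MeasureTheory Filter

/-- The toroidal mesh of size `n`: vertices `(ZMod n) × (ZMod n)`, with `(i,j)`
adjacent to `(i±1,j)` and `(i,j±1)`. -/
def torus (n : ℕ) : SimpleGraph (ZMod n × ZMod n) :=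
  SimpleGraph.fromRel (fun v w => w = (v.1 + 1, v.2) ∨ w = (v.1, v.2 + 1))

/-- One step of the majority coloring process with threshold 2: a vertex turns black
if it has at least two black neighbors; black vertices stay black. -/
def colorStep {V : Type*} (G : SimpleGraph V) (S : Set V) : Set V :=
  S ∪ {v | ∃ u w, u ≠ w ∧ G.Adj v u ∧ G.Adj v w ∧ u ∈ S ∧ w ∈ S}

/-- `S` is a dynamo if every vertex eventually turns black. -/
def IsDynamo {V : Type*} (G : SimpleGraph V) (S : Set V) : Prop :=
  ∀ v, ∃ t, v ∈ (colorStep G)^[t] S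

/-- The Bernoulli(p) measure on `Bool`. -/
noncomputable def bernoulliMeasure (p : ℝ) : Measure Bool :=
  ENNReal.ofReal p • Measure.dirac true + ENNReal.ofReal (1 - p) • Measure.dirac false

instance (p : ℝ) : IsFiniteMeasure (bernoulliMeasure p) := by
  constructor
  simp [bernoulliMeasure, ENNReal.add_lt_top, ENNReal.ofReal_lt_top]

/-- The product Bernoulli(p) measure on subsets (indicator functions) of `V`. -/
noncomputable def seedMeasure (V : Type*) [Fintype V] (p : ℝ) : Measure (V → Bool) :=
  Measure.pi fun _ => bernoulliMeasure p

/-! A dynamo spans the whole torus. Build its span one vertex at a time while keeping it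
partitioned into pairwise non-adjacent, connected, internally spanned clusters, each inside a
square of side `2k - 1` (Aizenman–Lebowitz). Adding a vertex merges it with the clusters next to
it into a cluster inside a square of side `4k - 1`. The torus itself fits in no square of side
`2k - 1`, so some merged cluster fits in a square of side `4k - 1` but in none of side `2k - 1`.
Lifted to `ℤ²`, that cluster crosses `k` disjoint double columns (or rows) of a square of side
`4k - 1`, and each of them holds a seed, because the square minus a double column is closed under
the threshold-2 rule. A union bound over the `n²` corners, two orientations and `(8k)^k` choices
of seeds bounds the probability by `2n²(8kp)^k`, which is at most `2/n` for `k = ⌈3 log n⌉` and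
`p ≤ 0.012 / log n`.
-/

namespace SimpleGraph

variable {V W : Type*} {G : SimpleGraph V} {H : SimpleGraph W}

/-! ### Bootstrap closure -/

variable (G) in
def IsBootstrapClosed (F : Set V) : Prop :=
  ∀ ⦃v u w⦄, u ≠ w → G.Adj v u → G.Adj v w → u ∈ F → w ∈ F → v ∈ F

variable (G) in
def bootstrapClosure : ClosureOperator (Set V) :=
  .ofCompletePred G.IsBootstrapClosed fun _ hs _ _ _ huw hu hw hmu hmw F hF =>
    hs F hF huw hu hw (hmu F hF) (hmw F hF)

theorem isBootstrapClosed_bootstrapClosure (A : Set V) :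
    G.IsBootstrapClosed (G.bootstrapClosure A) :=
  G.bootstrapClosure.isClosed_closure A

theorem IsBootstrapClosed.bootstrapClosure_subset {A F : Set V} (hF : G.IsBootstrapClosed F)
    (hAF : A ⊆ F) : G.bootstrapClosure A ⊆ F :=
  G.bootstrapClosure.closure_min hAF hF

theorem iterate_colorStep_subset_bootstrapClosure (A : Set V) (t : ℕ) :
    (colorStep G)^[t] A ⊆ G.bootstrapClosure A := by
  induction t with
  | zero => exact G.bootstrapClosure.le_closure A
  | succ t ih =>
    rw [Function.iterate_succ_apply']
    rintro v (hv | ⟨u, w, huw, hu, hw, hmu, hmw⟩)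
    · exact ih hv
    · exact isBootstrapClosed_bootstrapClosure A huw hu hw (ih hmu) (ih hmw)

theorem bootstrapClosure_induction [Finite V] {A : Set V} {P : Set V → Prop} (h₀ : P ∅)
    (hstep : ∀ F v, P F →
      (v ∈ A ∨ ∃ u w, u ≠ w ∧ G.Adj v u ∧ G.Adj v w ∧ u ∈ F ∧ w ∈ F) → P (insert v F)) :
    P (G.bootstrapClosure A) := by
  obtain ⟨F, ⟨hFA, hPF⟩, hmax⟩ :=
    (Set.toFinite {F | F ⊆ G.bootstrapClosure A ∧ P F}).exists_maximal ⟨∅, Set.empty_subset _, h₀⟩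
  have hgrow : ∀ v ∈ G.bootstrapClosure A, v ∉ F →
      (v ∈ A ∨ ∃ u w, u ≠ w ∧ G.Adj v u ∧ G.Adj v w ∧ u ∈ F ∧ w ∈ F) → False :=
    fun v hv hvF h => hvF (hmax ⟨Set.insert_subset hv hFA, hstep F v hPF h⟩
      (Set.subset_insert v F) (Set.mem_insert v F))
  have hAF : A ⊆ F := fun v hv => by
    by_contra hvF
    exact hgrow v (G.bootstrapClosure.le_closure A hv) hvF (.inl hv)
  have hclosed : G.IsBootstrapClosed F := fun v u w huw hu hw hmu hmw => by
    by_contra hvF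
    exact hgrow v (isBootstrapClosed_bootstrapClosure A huw hu hw (hFA hmu) (hFA hmw)) hvF
      (.inr ⟨u, w, huw, hu, hw, hmu, hmw⟩)
  rwa [hFA.antisymm (hclosed.bootstrapClosure_subset hAF)] at hPF

theorem IsBootstrapClosed.image {f : V → W} {B B' : Set V} (hB : G.IsBootstrapClosed B)
    (hlift : ∀ a w, H.Adj (f a) w → ∃ a', G.Adj a a' ∧ f a' = w)
    (hnbr : ∀ b ∈ B, ∀ x, G.Adj b x → x ∈ B') (hinj : Set.InjOn f B') :
    H.IsBootstrapClosed (f '' B) := by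
  rintro v _ _ huw hu hw ⟨a, ha, rfl⟩ ⟨b, hb, rfl⟩
  obtain ⟨a', haa', rfl⟩ := hlift a v hu.symm
  obtain ⟨b', hbb', hb'⟩ := hlift b (f a') hw.symm
  obtain rfl : b' = a' := hinj (hnbr b hb b' hbb') (hnbr a ha a' haa') hb'
  exact ⟨b', hB (fun hab => huw (congrArg f hab)) haa'.symm hbb'.symm ha hb, rfl⟩

theorem adj_of_adj_map {f : V → W} {B' : Set V}
    (hlift : ∀ a w, H.Adj (f a) w → ∃ a', G.Adj a a' ∧ f a' = w) (hinj : Set.InjOn f B')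
    {a b : V} (ha : ∀ x, G.Adj a x → x ∈ B') (hb : b ∈ B') (hab : H.Adj (f a) (f b)) :
    G.Adj a b := by
  obtain ⟨a', haa', ha'⟩ := hlift a (f b) hab
  rwa [hinj (ha a' haa') hb ha'] at haa'

theorem connected_induce_of_image {f : V → W} {D B' : Set V}
    (hlift : ∀ a w, H.Adj (f a) w → ∃ a', G.Adj a a' ∧ f a' = w) (hinj : Set.InjOn f B')
    (hDB' : D ⊆ B') (hnbr : ∀ d ∈ D, ∀ x, G.Adj d x → x ∈ B')
    (h : (H.induce (f '' D)).Connected) : (G.induce D).Connected := by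
  obtain ⟨⟨_, d₀, -, rfl⟩⟩ := h.nonempty
  have : Nonempty V := ⟨d₀⟩
  let g : f '' D → D := fun x => ⟨Function.invFunOn f D x, Function.invFunOn_mem x.2⟩
  have hg : ∀ x, f (g x) = x := fun x => Function.invFunOn_eq x.2
  refine h.map ⟨g, fun {x y} hxy => ?_⟩ fun d => ⟨⟨f d, d, d.2, rfl⟩, ?_⟩
  · refine adj_of_adj_map hlift hinj (hnbr _ (g x).2) (hDB' (g y).2) ?_
    simpa [hg] using hxy
  · exact Subtype.ext (hinj (hDB' (g _).2) (hDB' d.2) (hg _))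

theorem Walk.exists_apply_eq_of_le_of_le {f : W → ℤ} (hf : ∀ a b, H.Adj a b → f b ≤ f a + 1)
    {u v : W} (p : H.Walk u v) {x : ℤ} (hu : f u ≤ x) (hv : x ≤ f v) : ∃ w, f w = x := by
  induction p with
  | nil => exact ⟨_, le_antisymm hu hv⟩
  | cons h _ ih =>
    rcases hu.eq_or_lt with heq | hlt
    · exact ⟨_, heq⟩
    · exact ih (by linarith [hf _ _ h]) hv

/-! ### Clusters -/

variable (G) in
def IsSpannedCluster (S C : Set V) : Prop :=
  (G.induce C).Connected ∧ C ⊆ G.bootstrapClosure (S ∩ C)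

variable (G) in
def IsSmallClusterFamily (Small : Set V → Prop) (S : Set V) (𝒞 : Set (Set V)) : Prop :=
  (∀ C ∈ 𝒞, G.IsSpannedCluster S C ∧ Small C) ∧
    𝒞.Pairwise fun C D => ∀ a ∈ C, ∀ b ∈ D, ¬G.Adj a b

theorem induce_singleton_connected (v : V) : (G.induce {v}).Connected :=
  ⟨Preconnected.of_subsingleton⟩

theorem isSpannedCluster_insert_sUnion {S : Set V} {v : V} {𝒯 : Set (Set V)}
    (h𝒯 : ∀ D ∈ 𝒯, G.IsSpannedCluster S D ∧ ∃ a ∈ D, G.Adj v a)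
    (hv : v ∈ S ∨ ∃ u w, u ≠ w ∧ G.Adj v u ∧ G.Adj v w ∧ u ∈ ⋃₀ 𝒯 ∧ w ∈ ⋃₀ 𝒯) :
    G.IsSpannedCluster S (insert v (⋃₀ 𝒯)) := by
  set Cv := insert v (⋃₀ 𝒯)
  refine ⟨?_, ?_⟩
  · have hCv : Cv = ⋃₀ insert {v} ((insert v) '' 𝒯) := by
      ext x
      simp only [Cv, Set.mem_insert_iff, Set.mem_sUnion, Set.sUnion_insert, Set.mem_union,
        Set.mem_singleton_iff, Set.sUnion_image, Set.mem_iUnion, exists_prop]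
      constructor
      · rintro (rfl | ⟨D, hD, hxD⟩)
        · exact .inl rfl
        · exact .inr ⟨D, hD, .inr hxD⟩
      · rintro (rfl | ⟨D, hD, rfl | hxD⟩)
        exacts [.inl rfl, .inl rfl, .inr ⟨D, hD, hxD⟩]
    rw [hCv]
    refine induce_sUnion_connected_of_pairwise_not_disjoint ⟨_, Set.mem_insert _ _⟩ ?_ ?_
    · have hv : ∀ s ∈ insert {v} ((insert v) '' 𝒯), v ∈ s := by
        rintro s (rfl | ⟨D, -, rfl⟩)
        exacts [Set.mem_singleton v, Set.mem_insert v D]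
      exact fun {s t} hs ht => ⟨v, hv s hs, hv t ht⟩
    · intro s hs
      rcases Set.mem_insert_iff.1 hs with rfl | ⟨D, hD, rfl⟩
      · exact induce_singleton_connected v
      · obtain ⟨⟨hDconn, -⟩, a, haD, hva⟩ := h𝒯 D hD
        rw [Set.insert_eq]
        exact connected_induce_union (induce_singleton_connected v).preconnected
          hDconn.preconnected rfl haD hva
  · have hsub : ⋃₀ 𝒯 ⊆ G.bootstrapClosure (S ∩ Cv) := by
      rintro x ⟨D, hD, hxD⟩
      refine G.bootstrapClosure.monotone ?_ ((h𝒯 D hD).1.2 hxD)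
      exact Set.inter_subset_inter_right S fun y hy => Set.mem_insert_of_mem v ⟨D, hD, hy⟩
    rintro x (rfl | hx)
    · rcases hv with hvS | ⟨u, w, huw, hu, hw, hmu, hmw⟩
      · exact G.bootstrapClosure.le_closure _ ⟨hvS, Set.mem_insert x _⟩
      · exact isBootstrapClosed_bootstrapClosure _ huw hu hw (hsub hmu) (hsub hmw)
    · exact hsub hx

theorem IsSmallClusterFamily.exists_insert {Small Medium : Set V → Prop} {S F : Set V}
    {𝒞 : Set (Set V)} (h𝒞 : G.IsSmallClusterFamily Small S 𝒞) (hF : ⋃₀ 𝒞 = F) {v : V}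
    (hv : v ∈ S ∨ ∃ u w, u ≠ w ∧ G.Adj v u ∧ G.Adj v w ∧ u ∈ F ∧ w ∈ F)
    (hmerge : ∀ 𝒯 : Set (Set V), (∀ D ∈ 𝒯, Small D ∧ ∃ a ∈ D, G.Adj v a) →
      Medium (insert v (⋃₀ 𝒯)))
    (hsmall : ∀ C, G.IsSpannedCluster S C → Medium C → Small C) :
    ∃ 𝒞' : Set (Set V), ⋃₀ 𝒞' = insert v F ∧ G.IsSmallClusterFamily Small S 𝒞' := by
  obtain ⟨hgood, hsep⟩ := h𝒞
  set 𝒯 := {D ∈ 𝒞 | ∃ a ∈ D, G.Adj v a}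
  have h𝒯 : ∀ D ∈ 𝒯, G.IsSpannedCluster S D ∧ ∃ a ∈ D, G.Adj v a :=
    fun D hD => ⟨(hgood D hD.1).1, hD.2⟩
  have hnbr : ∀ u, G.Adj v u → u ∈ F → u ∈ ⋃₀ 𝒯 := by
    intro u hvu hu
    rw [← hF] at hu
    obtain ⟨D, hD, huD⟩ := hu
    exact ⟨D, ⟨hD, u, huD, hvu⟩, huD⟩
  have hCv : G.IsSpannedCluster S (insert v (⋃₀ 𝒯)) := by
    refine isSpannedCluster_insert_sUnion h𝒯 (hv.imp_right ?_)
    rintro ⟨u, w, huw, hu, hw, hmu, hmw⟩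
    exact ⟨u, w, huw, hu, hw, hnbr u hu hmu, hnbr w hw hmw⟩
  have hCvsmall : Small (insert v (⋃₀ 𝒯)) :=
    hsmall _ hCv (hmerge 𝒯 fun D hD => ⟨(hgood D hD.1).2, hD.2⟩)
  refine ⟨insert (insert v (⋃₀ 𝒯)) (𝒞 \ 𝒯), ?_, ?_, ?_⟩
  · rw [Set.sUnion_insert, ← hF, Set.insert_union, ← Set.sUnion_union,
      Set.union_sdiff_cancel (Set.sep_subset _ _)]
  · rintro C (rfl | hC)
    exacts [⟨hCv, hCvsmall⟩, hgood C hC.1]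
  · refine (hsep.mono Set.sdiff_subset).insert fun D hD hne => ?_
    have hfar : ∀ a ∈ insert v (⋃₀ 𝒯), ∀ b ∈ D, ¬G.Adj a b := by
      rintro a (rfl | ⟨D', hD', haD'⟩) b hbD hab
      · exact hD.2 ⟨hD.1, b, hbD, hab⟩
      · exact hsep hD'.1 hD.1 (fun h => hD.2 (h ▸ hD')) a haD' b hbD hab
    exact ⟨hfar, fun b hb a ha hba => hfar a ha b hb hba.symm⟩

theorem IsSmallClusterFamily.eq_univ {Small : Set V → Prop} {S : Set V} {𝒞 : Set (Set V)}
    (h𝒞 : G.IsSmallClusterFamily Small S 𝒞) (hG : G.Preconnected) (huniv : ⋃₀ 𝒞 = .univ)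
    {C : Set V} (hC : C ∈ 𝒞) {a : V} (ha : a ∈ C) : C = .univ := by
  refine Set.eq_univ_of_forall fun x => by_contra fun hx => ?_
  obtain ⟨d, -, hd₁, hd₂⟩ := (hG a x).some.exists_boundary_dart C ha hx
  obtain ⟨D, hD, hdD⟩ : d.snd ∈ ⋃₀ 𝒞 := huniv ▸ Set.mem_univ _
  exact h𝒞.2 hC hD (fun h => hd₂ (h ▸ hdD)) _ hd₁ _ hdD d.adj

theorem exists_isSpannedCluster_not_small [Finite V] (hG : G.Connected) {S : Set V}
    {Small Medium : Set V → Prop}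
    (hmerge : ∀ v (𝒯 : Set (Set V)), (∀ D ∈ 𝒯, Small D ∧ ∃ a ∈ D, G.Adj v a) →
      Medium (insert v (⋃₀ 𝒯)))
    (huniv : ¬Small .univ) (hS : G.bootstrapClosure S = .univ) :
    ∃ C, G.IsSpannedCluster S C ∧ Medium C ∧ ¬Small C := by
  by_contra! hsmall
  obtain ⟨𝒞, h𝒞univ, h𝒞⟩ : ∃ 𝒞 : Set (Set V), ⋃₀ 𝒞 = G.bootstrapClosure S ∧
      G.IsSmallClusterFamily Small S 𝒞 := by
    refine bootstrapClosure_induction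
      (P := fun F => ∃ 𝒞 : Set (Set V), ⋃₀ 𝒞 = F ∧ G.IsSmallClusterFamily Small S 𝒞)
      ⟨∅, Set.sUnion_empty, fun _ h => h.elim, Set.pairwise_empty _⟩ ?_
    rintro F v ⟨𝒞, hF, h𝒞⟩ hv
    exact h𝒞.exists_insert hF hv (hmerge v) hsmall
  rw [hS] at h𝒞univ
  obtain ⟨a⟩ := hG.nonempty
  obtain ⟨C, hC, haC⟩ : a ∈ ⋃₀ 𝒞 := h𝒞univ ▸ Set.mem_univ a
  exact huniv (h𝒞.eq_univ hG.preconnected h𝒞univ hC haC ▸ (h𝒞.1 C hC).2)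

end SimpleGraph

open SimpleGraph

theorem IsDynamo.bootstrapClosure_eq_univ {V : Type*} {G : SimpleGraph V} {S : Set V}
    (hS : IsDynamo G S) : G.bootstrapClosure S = .univ :=
  Set.eq_univ_of_forall fun v =>
    let ⟨t, ht⟩ := hS v
    iterate_colorStep_subset_bootstrapClosure S t ht

/-! ### The torus and its universal cover -/

noncomputable def grid : SimpleGraph (ℤ × ℤ) := hasse ℤ □ hasse ℤ

theorem grid_adj {a b : ℤ × ℤ} :
    grid.Adj a b ↔ (a.1 + 1 = b.1 ∨ b.1 + 1 = a.1) ∧ a.2 = b.2 ∨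
      (a.2 + 1 = b.2 ∨ b.2 + 1 = a.2) ∧ a.1 = b.1 := by
  simp [grid, boxProd_adj, hasse_adj, Order.covBy_iff_add_one_eq]

theorem grid_adj_zero_iff {e : ℤ × ℤ} :
    grid.Adj 0 e ↔ e = (1, 0) ∨ e = (-1, 0) ∨ e = (0, 1) ∨ e = (0, -1) := by
  obtain ⟨e₁, e₂⟩ := e
  simp only [grid_adj, Prod.fst_zero, Prod.snd_zero, Prod.mk.injEq]
  omega

theorem grid_connected : grid.Connected :=
  have : (hasse ℤ).Connected := ⟨hasse_preconnected_of_succ ℤ⟩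
  this.boxProd this

def torusCover (n : ℕ) : ℤ × ℤ →+ ZMod n × ZMod n :=
  (Int.castAddHom (ZMod n)).prodMap (Int.castAddHom (ZMod n))

@[simp]
theorem torusCover_apply (n : ℕ) (z : ℤ × ℤ) :
    torusCover n z = ((z.1 : ZMod n), (z.2 : ZMod n)) :=
  rfl

theorem torus_adj_add_torusCover {n : ℕ} (hn : 2 ≤ n) (x : ZMod n × ZMod n) {e : ℤ × ℤ}
    (he : grid.Adj 0 e) : (torus n).Adj x (x + torusCover n e) := by
  have : Fact (1 < n) := ⟨hn⟩
  rw [grid_adj_zero_iff] at he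
  simp only [torus, fromRel_adj, ne_eq, Prod.ext_iff]
  rcases he with rfl | rfl | rfl | rfl <;> simp

theorem torus_adj_torusCover {n : ℕ} (hn : 2 ≤ n) {a b : ℤ × ℤ} (h : grid.Adj a b) :
    (torus n).Adj (torusCover n a) (torusCover n b) := by
  have hab : grid.Adj 0 (b - a) := by
    rw [grid_adj] at h ⊢
    simp only [Prod.fst_zero, Prod.snd_zero, Prod.fst_sub, Prod.snd_sub]
    omega
  simpa using torus_adj_add_torusCover hn (torusCover n a) hab

theorem torus_connected {n : ℕ} (hn : 2 ≤ n) : (torus n).Connected :=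
  grid_connected.map ⟨torusCover n, torus_adj_torusCover hn⟩ fun x =>
    ⟨(x.1.cast, x.2.cast), by simp⟩

theorem exists_eq_add_torusCover_of_adj {n : ℕ} {x y : ZMod n × ZMod n}
    (h : (torus n).Adj x y) : ∃ e, grid.Adj 0 e ∧ y = x + torusCover n e := by
  simp only [torus, fromRel_adj] at h
  rcases h with ⟨-, (rfl | rfl) | (rfl | rfl)⟩
  · exact ⟨(1, 0), by simp [grid_adj], by ext <;> simp⟩
  · exact ⟨(0, 1), by simp [grid_adj], by ext <;> simp⟩
  · exact ⟨(-1, 0), by simp [grid_adj], by ext <;> simp⟩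
  · exact ⟨(0, -1), by simp [grid_adj], by ext <;> simp⟩

theorem exists_grid_adj_of_torus_adj {n : ℕ} (q : ZMod n × ZMod n) (z : ℤ × ℤ)
    {w : ZMod n × ZMod n} (h : (torus n).Adj (q + torusCover n z) w) :
    ∃ z', grid.Adj z z' ∧ q + torusCover n z' = w := by
  obtain ⟨e, he, rfl⟩ := exists_eq_add_torusCover_of_adj h
  refine ⟨z + e, ?_, by rw [map_add, add_assoc]⟩
  rw [grid_adj] at he ⊢
  simp only [Prod.fst_zero, Prod.snd_zero, Prod.fst_add, Prod.snd_add] at he ⊢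
  omega

theorem injOn_torusCover_Icc {n : ℕ} {a b : ℤ × ℤ} (h₁ : b.1 - a.1 < n) (h₂ : b.2 - a.2 < n) :
    Set.InjOn (torusCover n) (Set.Icc a b) := by
  have hcast : ∀ {x y : ℤ}, |y - x| < n → (x : ZMod n) = y → x = y := fun hxy h => by
    have := Int.eq_zero_of_abs_lt_dvd ((ZMod.intCast_eq_intCast_iff_dvd_sub _ _ n).mp h) hxy
    omega
  rintro x ⟨hax, hxb⟩ y ⟨hay, hyb⟩ hxy
  simp only [torusCover_apply, Prod.mk.injEq] at hxy
  rw [Prod.le_def] at hax hxb hay hyb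
  exact Prod.ext (hcast (abs_sub_lt_iff.2 (by omega)) hxy.1)
    (hcast (abs_sub_lt_iff.2 (by omega)) hxy.2)

theorem injOn_add_torusCover {n : ℕ} {s : ℤ} (hs : s + 3 ≤ n) (q : ZMod n × ZMod n) :
    Set.InjOn (q + torusCover n ·) (Set.Icc (-1, -1) (s + 1, s + 1)) :=
  (add_right_injective q).comp_injOn (injOn_torusCover_Icc (by simp; omega) (by simp; omega))

theorem mem_Icc_of_grid_adj {s : ℤ} {a b : ℤ × ℤ} (ha : a ∈ Set.Icc 0 (s, s))
    (h : grid.Adj a b) : b ∈ Set.Icc (-1, -1) (s + 1, s + 1) := by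
  simp only [Set.mem_Icc, Prod.le_def, Prod.fst_zero, Prod.snd_zero] at ha ⊢
  rw [grid_adj] at h
  omega

theorem Icc_zero_subset_Icc {s : ℤ} : Set.Icc 0 (s, s) ⊆ Set.Icc (-1, -1) (s + 1, s + 1) :=
  Set.Icc_subset_Icc (by simp [Prod.le_def]) (by simp [Prod.le_def])

def torusSquare (n : ℕ) (q : ZMod n × ZMod n) (s : ℤ) : Set (ZMod n × ZMod n) :=
  (q + torusCover n ·) '' Set.Icc 0 (s, s)

theorem not_univ_subset_torusSquare {n : ℕ} {s : ℤ} (hs : s + 1 < n) (q : ZMod n × ZMod n) :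
    ¬Set.univ ⊆ torusSquare n q s := by
  intro h
  obtain ⟨z, ⟨hz₀, hzs⟩, hz⟩ := h (Set.mem_univ (q + torusCover n (s + 1, 0)))
  simp only [Prod.le_def, Prod.fst_zero, Prod.snd_zero] at hz₀ hzs
  have := injOn_torusCover_Icc (a := 0) (b := (s + 1, s + 1)) (by simpa using hs)
    (by simpa using hs) (by simp [Prod.le_def]; omega) (by simp [Prod.le_def]; omega)
    (add_left_cancel hz)
  simp only [Prod.ext_iff] at this
  omega

theorem insert_sUnion_subset_torusSquare {n : ℕ} {s t : ℤ} (hs : 0 ≤ s) (ht : 2 * s + 2 ≤ t)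
    {v : ZMod n × ZMod n} {𝒯 : Set (Set (ZMod n × ZMod n))}
    (h𝒯 : ∀ D ∈ 𝒯, (∃ q, D ⊆ torusSquare n q s) ∧ ∃ a ∈ D, (torus n).Adj v a) :
    insert v (⋃₀ 𝒯) ⊆ torusSquare n (v - torusCover n (s + 1, s + 1)) t := by
  rintro x (rfl | ⟨D, hD, hxD⟩)
  · refine ⟨(s + 1, s + 1), ?_, by simp⟩
    simp only [Set.mem_Icc, Prod.le_def, Prod.fst_zero, Prod.snd_zero]
    omega
  obtain ⟨⟨q, hDq⟩, a, haD, hva⟩ := h𝒯 D hD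
  obtain ⟨e, he, rfl⟩ := exists_eq_add_torusCover_of_adj hva
  obtain ⟨z, ⟨hz₀, hzs⟩, rfl⟩ := hDq hxD
  obtain ⟨za, ⟨hza₀, hzas⟩, hza⟩ := hDq haD
  refine ⟨e + z - za + (s + 1, s + 1), ?_, ?_⟩
  · rw [grid_adj_zero_iff] at he
    simp only [Prod.le_def, Prod.fst_zero, Prod.snd_zero] at hz₀ hzs hza₀ hzas
    rcases he with rfl | rfl | rfl | rfl <;> simp [Prod.le_def] <;> omega
  · simp only [map_add, map_sub]
    rw [eq_sub_of_add_eq hza.symm]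
    ring

def coord : Bool → ℤ × ℤ → ℤ
  | true => Prod.fst
  | false => Prod.snd

theorem coord_le_of_grid_adj (o : Bool) {a b : ℤ × ℤ} (h : grid.Adj a b) :
    coord o b ≤ coord o a + 1 := by
  rw [grid_adj] at h
  cases o <;> simp only [coord] <;> omega

theorem mem_Icc_zero_iff {s : ℤ} {z : ℤ × ℤ} :
    z ∈ Set.Icc 0 (s, s) ↔ ∀ o, 0 ≤ coord o z ∧ coord o z ≤ s := by
  simp only [Set.mem_Icc, Prod.le_def, Prod.fst_zero, Prod.snd_zero, Bool.forall_bool, coord]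
  tauto

theorem image_add_torusCover_eq_preimage {n : ℕ} (q : ZMod n × ZMod n) (b : ℤ × ℤ)
    (D : Set (ℤ × ℤ)) :
    (q + torusCover n ·) '' D = (q + torusCover n b + torusCover n ·) '' ((· + b) ⁻¹' D) := by
  ext x
  constructor
  · rintro ⟨z, hz, rfl⟩
    exact ⟨z - b, by simpa using hz, by simp only [add_assoc, ← map_add, add_sub_cancel]⟩
  · rintro ⟨z, hz, rfl⟩
    exact ⟨z + b, hz, by simp only [map_add]; abel⟩

theorem exists_lift_of_subset_torusSquare {n : ℕ} {s r : ℤ} {C : Set (ZMod n × ZMod n)}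
    {q : ZMod n × ZMod n} (hC : C ⊆ torusSquare n q s)
    (hns : ∀ q', ¬C ⊆ torusSquare n q' r) :
    ∃ q' D o, C = (q' + torusCover n ·) '' D ∧ D ⊆ Set.Icc 0 (s, s) ∧
      (∃ z ∈ D, coord o z ≤ 0) ∧ ∃ z ∈ D, r < coord o z := by
  set D₀ := {z ∈ Set.Icc 0 (s, s) | q + torusCover n z ∈ C}
  have hD₀ : C = (q + torusCover n ·) '' D₀ := by
    refine (Set.image_subset_iff.2 fun z hz => hz.2).antisymm' fun x hx => ?_
    obtain ⟨z, hz, rfl⟩ := hC hx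
    exact ⟨z, ⟨hz, hx⟩, rfl⟩
  have hne : D₀.Nonempty := by
    by_contra! h
    exact hns q (by simp [hD₀, h])
  -- translate the lift so that its coordinatewise minimum is the origin
  choose m hm hmin using fun o =>
    D₀.exists_min_image (coord o) ((Set.finite_Icc _ _).subset (Set.sep_subset _ _)) hne
  set b : ℤ × ℤ := (coord true (m true), coord false (m false))
  have hb : ∀ o, coord o b = coord o (m o) := by intro o; cases o <;> rfl
  have hadd : ∀ o z, coord o (z + b) = coord o z + coord o b := by intro o z; cases o <;> rfl
  set D := (· + b) ⁻¹' D₀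
  have hCD : C = (q + torusCover n b + torusCover n ·) '' D :=
    hD₀.trans (image_add_torusCover_eq_preimage q b D₀)
  have hD : D ⊆ Set.Icc 0 (s, s) := fun z hz => mem_Icc_zero_iff.2 fun o => by
    have h₁ := mem_Icc_zero_iff.1 hz.1 o
    have h₂ := mem_Icc_zero_iff.1 (hm o).1 o
    have h₃ := hmin o _ hz
    rw [hadd, hb] at h₁ h₃
    omega
  obtain ⟨o, z, hzD, hz⟩ : ∃ o, ∃ z ∈ D, r < coord o z := by
    by_contra! h
    refine hns (q + torusCover n b) (hCD ▸ Set.image_mono fun z hz => ?_)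
    exact mem_Icc_zero_iff.2 fun o => ⟨(mem_Icc_zero_iff.1 (hD hz) o).1, h o z hz⟩
  refine ⟨q + torusCover n b, D, o, hCD, hD, ⟨m o - b, by simpa [D] using hm o, ?_⟩, z, hzD, hz⟩
  cases o <;> simp [coord, b]

/-! ### Seeded strips -/

theorem exists_coord_eq {n : ℕ} {s : ℤ} (hs : s + 3 ≤ n) {q : ZMod n × ZMod n}
    {D : Set (ℤ × ℤ)} (hD : D ⊆ Set.Icc 0 (s, s))
    (hC : ((torus n).induce ((q + torusCover n ·) '' D)).Connected) (o : Bool)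
    {z₀ z₁ : ℤ × ℤ} (hz₀ : z₀ ∈ D) (hz₁ : z₁ ∈ D) {c : ℤ} (h₀ : coord o z₀ ≤ c)
    (h₁ : c ≤ coord o z₁) : ∃ z ∈ D, coord o z = c := by
  have hDconn : (grid.induce D).Connected :=
    connected_induce_of_image (exists_grid_adj_of_torus_adj q) (injOn_add_torusCover hs q)
      (hD.trans Icc_zero_subset_Icc) (fun d hd _ => mem_Icc_of_grid_adj (hD hd)) hC
  obtain ⟨p⟩ := hDconn.preconnected ⟨z₀, hz₀⟩ ⟨z₁, hz₁⟩
  obtain ⟨z, hz⟩ := p.exists_apply_eq_of_le_of_le (f := fun z : D => coord o z)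
    (fun _ _ h => coord_le_of_grid_adj o h) h₀ h₁
  exact ⟨z, z.2, hz⟩

theorem exists_seed_near_coord {n : ℕ} {s : ℤ} (hs : s + 3 ≤ n) {q : ZMod n × ZMod n}
    {D : Set (ℤ × ℤ)} (hD : D ⊆ Set.Icc 0 (s, s)) {S : Set (ZMod n × ZMod n)}
    (hspan : (q + torusCover n ·) '' D ⊆
      (torus n).bootstrapClosure (S ∩ (q + torusCover n ·) '' D)) (o : Bool)
    {z : ℤ × ℤ} (hz : z ∈ D) :
    ∃ z' ∈ D, coord o z ≤ coord o z' ∧ coord o z' ≤ coord o z + 1 ∧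
      q + torusCover n z' ∈ S := by
  by_contra! h
  set c := coord o z
  -- The square minus the double column `{c, c + 1}` is closed; lacking seeds in that column,
  -- it would contain the whole cluster, `z` included.
  set B := {x ∈ Set.Icc 0 (s, s) | coord o x < c ∨ c + 1 < coord o x}
  have hB : grid.IsBootstrapClosed B := by
    intro v u w huw hu hw hmu hmw
    simp only [B, c, Set.mem_ofPred_eq, Set.mem_Icc, Prod.le_def, Prod.fst_zero,
      Prod.snd_zero] at hmu hmw ⊢
    rw [grid_adj] at hu hw
    rw [Ne, Prod.ext_iff] at huw
    cases o <;> simp only [coord] at hmu hmw ⊢ <;> omega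
  have hBimage : (torus n).IsBootstrapClosed ((q + torusCover n ·) '' B) :=
    hB.image (exists_grid_adj_of_torus_adj q) (fun b hb _ => mem_Icc_of_grid_adj hb.1)
      (injOn_add_torusCover hs q)
  have hseeds : S ∩ (q + torusCover n ·) '' D ⊆ (q + torusCover n ·) '' B := by
    rintro _ ⟨hS, z', hz', rfl⟩
    refine ⟨z', ⟨hD hz', ?_⟩, rfl⟩
    by_contra! hc
    exact h z' hz' hc.1 hc.2 hS
  obtain ⟨z', ⟨hz'Icc, hz'⟩, hzz'⟩ :=
    hBimage.bootstrapClosure_subset hseeds (hspan ⟨z, hz, rfl⟩)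
  rw [injOn_add_torusCover hs q (Icc_zero_subset_Icc hz'Icc) (Icc_zero_subset_Icc (hD hz))
    hzz'] at hz'
  omega

noncomputable def strip : Bool → ℤ → ℤ → Finset (ℤ × ℤ)
  | true, s, c => Finset.Icc c (c + 1) ×ˢ Finset.Icc 0 s
  | false, s, c => Finset.Icc 0 s ×ˢ Finset.Icc c (c + 1)

theorem mem_strip {o : Bool} {s c : ℤ} (hc : 0 ≤ c) (hcs : c + 1 ≤ s) {z : ℤ × ℤ} :
    z ∈ strip o s c ↔ z ∈ Set.Icc 0 (s, s) ∧ c ≤ coord o z ∧ coord o z ≤ c + 1 := by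
  cases o <;> simp [strip, coord, Prod.le_def] <;> omega

theorem card_strip (o : Bool) (s c : ℤ) : (strip o s c).card = 2 * (s + 1).toNat := by
  cases o <;> simp [strip, Finset.card_product, Int.card_Icc, show c + 1 + 1 - c = 2 by ring,
    mul_comm]

noncomputable def stripCells (n k : ℕ) (q : ZMod n × ZMod n) (o : Bool) (i : Fin k) :
    Finset (ZMod n × ZMod n) :=
  (strip o (4 * k - 2) (2 * i)).image (q + torusCover n ·)

theorem SimpleGraph.IsSpannedCluster.exists_seeded_strips {n k : ℕ} (hn : 4 * k + 1 ≤ n)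
    {S C : Set (ZMod n × ZMod n)} (hC : (torus n).IsSpannedCluster S C) {q : ZMod n × ZMod n}
    (hmed : C ⊆ torusSquare n q (4 * k - 2)) (hns : ∀ q', ¬C ⊆ torusSquare n q' (2 * k - 2)) :
    ∃ q o, ∀ i : Fin k, ∃ x ∈ stripCells n k q o i, x ∈ S := by
  obtain ⟨q', D, o, rfl, hD, ⟨z₀, hz₀D, hz₀⟩, z₁, hz₁D, hz₁⟩ :=
    exists_lift_of_subset_torusSquare hmed hns
  have hs : 4 * (k : ℤ) - 2 + 3 ≤ n := by omega
  refine ⟨q', o, fun i => ?_⟩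
  have hi := i.2
  obtain ⟨z, hzD, hz⟩ := exists_coord_eq hs hD hC.1 o hz₀D hz₁D (c := 2 * i) (by omega)
    (by omega)
  obtain ⟨z', hz'D, h₁, h₂, hz'S⟩ := exists_seed_near_coord hs hD hC.2 o hzD
  exact ⟨_, Finset.mem_image_of_mem _ ((mem_strip (by omega) (by omega)).2
    ⟨hD hz'D, by omega, by omega⟩), hz'S⟩

theorem IsDynamo.exists_seeded_strips {n k : ℕ} (hk : 1 ≤ k) (hn : 4 * k + 1 ≤ n)
    {S : Set (ZMod n × ZMod n)} (hS : IsDynamo (torus n) S) :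
    ∃ q o, ∀ i : Fin k, ∃ x ∈ stripCells n k q o i, x ∈ S := by
  have : NeZero n := ⟨by omega⟩
  obtain ⟨C, hC, ⟨q, hq⟩, hns⟩ := exists_isSpannedCluster_not_small (torus_connected (by omega))
    (Small := fun C => ∃ q, C ⊆ torusSquare n q (2 * k - 2))
    (Medium := fun C => ∃ q, C ⊆ torusSquare n q (4 * k - 2))
    (fun _ _ h => ⟨_, insert_sUnion_subset_torusSquare (by omega) (by omega) h⟩)
    (fun ⟨q, h⟩ => not_univ_subset_torusSquare (by omega) q h) hS.bootstrapClosure_eq_univ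
  exact hC.exists_seeded_strips hn hq fun q h => hns ⟨q, h⟩

/-! ### Probability -/

open scoped ENNReal

theorem bernoulliMeasure_singleton_true (p : ℝ) :
    bernoulliMeasure p {true} = ENNReal.ofReal p := by
  simp [bernoulliMeasure]

theorem bernoulliMeasure_univ {p : ℝ} (hp₀ : 0 ≤ p) (hp₁ : p ≤ 1) :
    bernoulliMeasure p .univ = 1 := by
  simp [bernoulliMeasure, ← ENNReal.ofReal_add hp₀ (sub_nonneg.2 hp₁)]

theorem seedMeasure_forall_eq_true {V : Type*} [Fintype V] {p : ℝ} (hp₀ : 0 ≤ p) (hp₁ : p ≤ 1)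
    (T : Finset V) : seedMeasure V p {f | ∀ v ∈ T, f v = true} = ENNReal.ofReal p ^ T.card := by
  classical
  have hT : {f : V → Bool | ∀ v ∈ T, f v = true} =
      Set.univ.pi fun v => if v ∈ T then {true} else .univ := by
    ext f
    simp only [Set.mem_ofPred_eq, Set.mem_pi, Set.mem_univ, true_implies]
    refine forall_congr' fun v => ?_
    split_ifs <;> simp [*]
  rw [seedMeasure, hT, Measure.pi_pi]
  simp_rw [apply_ite (bernoulliMeasure p), bernoulliMeasure_singleton_true,
    bernoulliMeasure_univ hp₀ hp₁]
  rw [Finset.prod_ite_mem, Finset.univ_inter, Finset.prod_const]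

theorem seedMeasure_forall_exists_le {V ι : Type*} [Fintype V] [Fintype ι] {p : ℝ}
    (hp₀ : 0 ≤ p) (hp₁ : p ≤ 1) (A : ι → Finset V)
    (hA : Pairwise fun i j => Disjoint (A i) (A j)) :
    seedMeasure V p {f | ∀ i, ∃ v ∈ A i, f v = true} ≤
      ∏ i, ((A i).card : ℝ≥0∞) * ENNReal.ofReal p := by
  classical
  have hcover : {f : V → Bool | ∀ i, ∃ v ∈ A i, f v = true} ⊆
      ⋃ σ : (i : ι) → A i, {f | ∀ v ∈ Finset.univ.image fun i => (σ i : V), f v = true} := by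
    intro f hf
    choose σ hσA hσ using hf
    simp only [Set.mem_iUnion, Finset.mem_image, Finset.mem_univ, true_and,
      forall_exists_index, forall_apply_eq_imp_iff, Set.mem_ofPred_eq]
    exact ⟨fun i => ⟨σ i, hσA i⟩, hσ⟩
  have hinj : ∀ σ : (i : ι) → A i, Function.Injective fun i => (σ i : V) := by
    intro σ i j (hij : (σ i : V) = σ j)
    by_contra hne
    exact Finset.disjoint_left.1 (hA hne) (σ i).2 (hij ▸ (σ j).2)
  calc _ ≤ ∑ σ : (i : ι) → A i,
        seedMeasure V p {f | ∀ v ∈ Finset.univ.image fun i => (σ i : V), f v = true} :=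
        (measure_mono hcover).trans (measure_iUnion_fintype_le _ _)
    _ = ∑ _σ : (i : ι) → A i, ENNReal.ofReal p ^ Fintype.card ι := by
        refine Finset.sum_congr rfl fun σ _ => ?_
        rw [seedMeasure_forall_eq_true hp₀ hp₁, Finset.card_image_of_injective _ (hinj σ),
          Finset.card_univ]
    _ = ∏ i, ((A i).card : ℝ≥0∞) * ENNReal.ofReal p := by
        rw [Finset.sum_const, Finset.card_univ, Fintype.card_pi, Finset.prod_mul_distrib,
          Finset.prod_const, Finset.card_univ, nsmul_eq_mul]
        simp

theorem pairwise_disjoint_stripCells {n k : ℕ} (hn : 4 * k + 1 ≤ n) (q : ZMod n × ZMod n)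
    (o : Bool) : Pairwise fun i j => Disjoint (stripCells n k q o i) (stripCells n k q o j) := by
  intro i j hij
  have hi := i.2
  have hj := j.2
  refine Finset.disjoint_left.2 fun x hxi hxj => hij ?_
  obtain ⟨z, hz, rfl⟩ := Finset.mem_image.1 hxi
  obtain ⟨z', hz', hzz'⟩ := Finset.mem_image.1 hxj
  rw [mem_strip (by omega) (by omega)] at hz hz'
  obtain rfl := injOn_add_torusCover (s := 4 * k - 2) (by omega) q
    (Icc_zero_subset_Icc hz'.1) (Icc_zero_subset_Icc hz.1) hzz'
  exact Fin.ext (by omega)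

theorem card_stripCells_le {n k : ℕ} (q : ZMod n × ZMod n) (o : Bool) (i : Fin k) :
    (stripCells n k q o i).card ≤ 8 * k := by
  refine Finset.card_image_le.trans ?_
  rw [card_strip]
  omega

theorem seedMeasure_isDynamo_le {n k : ℕ} [NeZero n] {p : ℝ} (hp₀ : 0 ≤ p) (hp₁ : p ≤ 1)
    (hk : 1 ≤ k) (hn : 4 * k + 1 ≤ n) :
    seedMeasure (ZMod n × ZMod n) p {f | IsDynamo (torus n) {v | f v = true}} ≤
      ENNReal.ofReal (2 * n ^ 2 * (8 * k * p) ^ k) := by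
  have hdyn : {f : ZMod n × ZMod n → Bool | IsDynamo (torus n) {v | f v = true}} ⊆
      ⋃ q, ⋃ o, {f | ∀ i, ∃ v ∈ stripCells n k q o i, f v = true} := by
    intro f hf
    obtain ⟨q, o, h⟩ := IsDynamo.exists_seeded_strips hk hn hf
    exact Set.mem_iUnion₂.2 ⟨q, o, h⟩
  calc _ ≤ ∑ q, ∑ o, seedMeasure (ZMod n × ZMod n) p
        {f | ∀ i, ∃ v ∈ stripCells n k q o i, f v = true} :=
        (measure_mono hdyn).trans <| (measure_iUnion_fintype_le _ _).trans <|
          Finset.sum_le_sum fun q _ => measure_iUnion_fintype_le _ _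
    _ ≤ ∑ _q : ZMod n × ZMod n, ∑ _o : Bool,
          ∏ _i : Fin k, ((8 * k : ℕ) : ℝ≥0∞) * ENNReal.ofReal p := by
        gcongr with q _ o _ i
        refine (seedMeasure_forall_exists_le hp₀ hp₁ _
          (pairwise_disjoint_stripCells hn q o)).trans ?_
        gcongr with i
        exact_mod_cast card_stripCells_le q o i
    _ = ENNReal.ofReal (2 * n ^ 2 * (8 * k * p) ^ k) := by
        simp only [Finset.sum_const, Finset.prod_const, Finset.card_univ, Fintype.card_prod,
          ZMod.card, Fintype.card_bool, Fintype.card_fin, nsmul_eq_mul]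
        rw [ENNReal.ofReal_mul (by positivity), ENNReal.ofReal_pow (by positivity),
          ENNReal.ofReal_mul (by positivity), ENNReal.ofReal_mul (by positivity)]
        simp [ENNReal.ofReal_natCast]
        ring

theorem seedMeasure_isDynamo_le_two_div {N : ℕ} [NeZero N] {p : ℝ} (hp₀ : 0 ≤ p)
    (hp : p ≤ 0.012 / Real.log N) (hlog : 2 ≤ Real.log N) (hN : 12 * Real.log N + 5 ≤ N) :
    seedMeasure (ZMod N × ZMod N) p {f | IsDynamo (torus N) {v | f v = true}} ≤
      ENNReal.ofReal (2 / N) := by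
  set L := Real.log N
  -- `8kp ≤ 0.336 < e⁻¹`, so `(8kp)^k ≤ e^(-k) ≤ N⁻³`
  set k := ⌈3 * L⌉₊
  have hk₁ : 3 * L ≤ k := Nat.le_ceil _
  have hk₂ : (k : ℝ) < 3 * L + 1 := Nat.ceil_lt_add_one (by positivity)
  have hpL : p * L ≤ 0.012 := by rwa [le_div_iff₀ (by positivity)] at hp
  have hkp : 8 * k * p ≤ Real.exp (-1) := by
    nlinarith [Real.exp_neg_one_gt_d9, mul_le_mul_of_nonneg_right hk₂.le hp₀]
  have hN₀ : (0 : ℝ) < N := by linarith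
  have hk : 1 ≤ k := by exact_mod_cast (by linarith : (1 : ℝ) ≤ k)
  have hkN : 4 * k + 1 ≤ N := by exact_mod_cast (by push_cast; linarith : ((4 * k + 1 : ℕ) : ℝ) ≤ N)
  refine (seedMeasure_isDynamo_le hp₀ (by nlinarith) hk hkN).trans (ENNReal.ofReal_le_ofReal ?_)
  calc 2 * (N : ℝ) ^ 2 * (8 * k * p) ^ k ≤ 2 * N ^ 2 * Real.exp (-1) ^ k := by gcongr
    _ = 2 * N ^ 2 * Real.exp (-k) := by rw [← Real.exp_nat_mul, mul_neg_one]
    _ ≤ 2 * N ^ 2 * Real.exp (-Real.log (N ^ 3)) := by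
        gcongr
        rw [Real.log_pow]
        push_cast
        linarith
    _ = 2 / N := by
        rw [Real.exp_neg, Real.exp_log (by positivity)]
        field_simp

theorem eventually_twelve_mul_log_add_five_le : ∀ᶠ N : ℕ in atTop, 12 * Real.log N + 5 ≤ N := by
  filter_upwards [tendsto_natCast_atTop_atTop.eventually
      (Real.isLittleO_log_id_atTop.bound (by norm_num : (0 : ℝ) < 1 / 24)),
    tendsto_natCast_atTop_atTop.eventually_ge_atTop (10 : ℝ)] with N hlog hN
  rw [Real.norm_eq_abs, Real.norm_eq_abs, id, abs_of_nonneg (by linarith : (0 : ℝ) ≤ N)] at hlog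
  linarith [le_abs_self (Real.log N)]

/-- If `0 ≤ p n ≤ 0.012 / ln n` for all sufficiently large `n`, then the probability
that the random seed set `S^p` is a dynamo on the toroidal mesh of size `n` tends to `0`. -/
theorem torus_not_dynamo_whp (p : ℕ → ℝ)
    (hp : ∀ᶠ n : ℕ in atTop, 0 ≤ p n ∧ p n ≤ 0.012 / Real.log n) :
    Tendsto
      (fun n : ℕ =>
        seedMeasure (ZMod (n + 1) × ZMod (n + 1)) (p (n + 1))
          {f | IsDynamo (torus (n + 1)) {v | f v = true}})
      atTop (nhds 0) := by
  have hlog : ∀ᶠ N : ℕ in atTop, 2 ≤ Real.log N :=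
    (Real.tendsto_log_atTop.comp tendsto_natCast_atTop_atTop).eventually_ge_atTop 2
  have hbound : ∀ᶠ n : ℕ in atTop,
      seedMeasure (ZMod (n + 1) × ZMod (n + 1)) (p (n + 1))
          {f | IsDynamo (torus (n + 1)) {v | f v = true}} ≤
        ENNReal.ofReal (2 / (n + 1 : ℕ)) := by
    filter_upwards [(tendsto_add_atTop_nat 1).eventually
      (hp.and (hlog.and eventually_twelve_mul_log_add_five_le))] with n ⟨⟨hpn₀, hpn⟩, hlogn, hn⟩
    exact seedMeasure_isDynamo_le_two_div hpn₀ hpn hlogn hn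
  have hlim : Tendsto (fun n : ℕ => ENNReal.ofReal (2 / (n + 1 : ℕ))) atTop (nhds 0) := by
    simpa using ENNReal.tendsto_ofReal
      ((tendsto_const_div_atTop_nhds_zero_nat (2 : ℝ)).comp (tendsto_add_atTop_nat 1))
  exact tendsto_of_tendsto_of_tendsto_of_le_of_le' tendsto_const_nhds hlim
    (.of_forall fun _ => zero_le) hbound
end

section
/- Let G_n be the toroidal mesh of size n with the majority coloring process of threshold 2. If p = p(n) satisfies 1.65/ln(n) ≤ p(n) ≤ 1 for all sufficiently large n, then the probability (under the product Bernoulli(p(n)) measure) that the random seed set S^p is a dynamo on G_n tends to 1 as n → ∞. -/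
/-!
A seed set spans the torus as soon as, for some `K`, every run of `K` consecutive vertices along
either axis contains a seed and some vertex `(a, b)` carries a *nucleus*: `(a, b)` is a seed and
each of the first `K` L-shaped shells around it contains one. The black square at `(a, b)` then
grows shell by shell, each new side turning black outward from its seed because every vertex of
it also touches the side below; past size `K` the seeds are supplied by the runs.

Take `L = log N` and `K = ⌈2 L²⌉`. A union bound over the `2 N²` runs costs
`2 N² (1 - p) ^ K ≤ 2 N ^ (-1.3)`. Nuclei at the corners of `M² ≈ (N / 2 L²)²` disjoint squares
are independent, each of probability `(q; q)_K² ≥ exp (-π² / 3 p) ≥ N ^ (-π² / 4.95)` with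
`q = 1 - p`, by expanding `-log (1 - q ^ k)` into powers and summing `∑ 1 / m² = π² / 6`. The
threshold `1.65` lies just above `π² / 6`, which makes this exponent smaller than `2`, so the
probability that no square holds a nucleus is at most `exp (-M² N ^ (-π² / 4.95)) → 0`.
-/

open MeasureTheory Filter

open Finset

section ProductMeasure
variable {ι : Type*} {α : ι → Type*}

theorem DependsOn.preimage_restrict_image {A : Set (∀ i, α i)} {S : Finset ι}
    (hA : DependsOn (· ∈ A) S) : S.restrict ⁻¹' (S.restrict '' A) = A := by
  refine Set.Subset.antisymm ?_ (Set.subset_preimage_image _ _)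
  rintro x ⟨y, hy, hyx⟩
  exact (hA fun i hi => congrFun hyx ⟨i, hi⟩).mp hy

variable [Fintype ι] [∀ i, MeasurableSpace (α i)] [∀ i, MeasurableSingletonClass (α i)]
  [∀ i, Countable (α i)] {μ : ∀ i, Measure (α i)} [∀ i, IsProbabilityMeasure (μ i)]

open ProbabilityTheory in
theorem measure_pi_inter_of_dependsOn {S T : Finset ι} (hST : Disjoint S T)
    {A B : Set (∀ i, α i)} (hA : DependsOn (· ∈ A) S) (hB : DependsOn (· ∈ B) T) :
    Measure.pi μ (A ∩ B) = Measure.pi μ A * Measure.pi μ B := by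
  have hind : IndepFun S.restrict T.restrict (Measure.pi μ) :=
    (iIndepFun_pi (X := fun _ => id) fun _ => aemeasurable_id).indepFun_finset S T hST
      fun i => measurable_pi_apply i
  rw [← hA.preimage_restrict_image, ← hB.preimage_restrict_image]
  exact hind.measure_inter_preimage_eq_mul _ _ (Set.to_countable _).measurableSet
    (Set.to_countable _).measurableSet

theorem measure_pi_biInter_of_dependsOn {κ : Type*} (m : Finset κ)
    {T : κ → Finset ι} (hT : (m : Set κ).PairwiseDisjoint T) {A : κ → Set (∀ i, α i)}
    (hA : ∀ k ∈ m, DependsOn (· ∈ A k) (T k)) :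
    Measure.pi μ (⋂ k ∈ m, A k) = ∏ k ∈ m, Measure.pi μ (A k) := by
  classical
  induction m using Finset.induction with
  | empty => simp
  | insert k m hk ih =>
    rw [prod_insert hk, set_biInter_insert,
      ← ih (hT.subset (by simp)) fun j hj => hA j (mem_insert_of_mem hj)]
    refine measure_pi_inter_of_dependsOn (S := T k) (T := m.biUnion T) ?_ (hA k (by simp)) ?_
    · exact (disjoint_biUnion_right _ _ _).mpr fun j hj =>
        hT (mem_insert_self k m) (mem_insert_of_mem hj) (ne_of_mem_of_not_mem hj hk).symm
    · intro x y hxy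
      simp only [Set.mem_iInter₂]
      exact propext <| forall₂_congr fun j hj =>
        (hA j (mem_insert_of_mem hj) fun i hi => hxy i (mem_biUnion.mpr ⟨j, hj, hi⟩)).to_iff

end ProductMeasure

section Seed
variable {V : Type*} [Fintype V] {p : ℝ}

theorem isProbabilityMeasure_bernoulliMeasure (h0 : 0 ≤ p) (h1 : p ≤ 1) :
    IsProbabilityMeasure (bernoulliMeasure p) :=
  ⟨by simp [bernoulliMeasure, ← ENNReal.ofReal_add h0 (sub_nonneg.2 h1)]⟩

theorem isProbabilityMeasure_seedMeasure (h0 : 0 ≤ p) (h1 : p ≤ 1) :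
    IsProbabilityMeasure (seedMeasure V p) :=
  have := isProbabilityMeasure_bernoulliMeasure h0 h1
  inferInstanceAs (IsProbabilityMeasure (Measure.pi _))

theorem seedMeasure_forall_false (h0 : 0 ≤ p) (h1 : p ≤ 1) (s : Finset V) :
    seedMeasure V p {f | ∀ v ∈ s, f v = false} = ENNReal.ofReal ((1 - p) ^ #s) := by
  classical
  have := isProbabilityMeasure_bernoulliMeasure h0 h1
  have hpi : {f : V → Bool | ∀ v ∈ s, f v = false} =
      Set.univ.pi fun v => if v ∈ s then {false} else Set.univ := by
    ext f
    simp only [Set.mem_pi, Set.mem_univ, true_implies]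
    refine forall_congr' fun v => ?_
    split_ifs <;> simp [*]
  rw [hpi, seedMeasure, Measure.pi_pi]
  have hfalse : bernoulliMeasure p {false} = ENNReal.ofReal (1 - p) := by simp [bernoulliMeasure]
  simp only [apply_ite (bernoulliMeasure p), measure_univ, hfalse]
  rw [prod_ite_mem, univ_inter, prod_const, ENNReal.ofReal_pow (sub_nonneg.2 h1)]

theorem seedMeasure_exists_true (h0 : 0 ≤ p) (h1 : p ≤ 1) (s : Finset V) :
    seedMeasure V p {f | ∃ v ∈ s, f v = true} = ENNReal.ofReal (1 - (1 - p) ^ #s) := by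
  have := isProbabilityMeasure_seedMeasure (V := V) h0 h1
  have hcompl : {f : V → Bool | ∃ v ∈ s, f v = true} = {f | ∀ v ∈ s, f v = false}ᶜ := by
    ext f; simp
  rw [hcompl, prob_compl_eq_one_sub (Set.toFinite _).measurableSet,
    seedMeasure_forall_false h0 h1, ENNReal.ofReal_sub _ (by positivity), ENNReal.ofReal_one]

theorem seedMeasure_exists_forall_false_le (h0 : 0 ≤ p) (h1 : p ≤ 1) {ι : Type*} [Fintype ι]
    {s : ι → Finset V} {m : ℕ} (hs : ∀ i, #(s i) = m) :
    seedMeasure V p {f | ∃ i, ∀ v ∈ s i, f v = false} ≤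
      Fintype.card ι * ENNReal.ofReal ((1 - p) ^ m) := by
  have hunion : {f : V → Bool | ∃ i, ∀ v ∈ s i, f v = false} =
      ⋃ i, {f | ∀ v ∈ s i, f v = false} := by
    ext; simp
  rw [hunion]
  refine (measure_iUnion_fintype_le _ _).trans_eq ?_
  simp [seedMeasure_forall_false h0 h1, hs]

theorem seedMeasure_forall_exists_true {κ : Type*} (h0 : 0 ≤ p) (h1 : p ≤ 1) (m : Finset κ)
    {s : κ → Finset V} (hs : (m : Set κ).PairwiseDisjoint s) :
    seedMeasure V p {f | ∀ k ∈ m, ∃ v ∈ s k, f v = true} =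
      ∏ k ∈ m, ENNReal.ofReal (1 - (1 - p) ^ #(s k)) := by
  classical
  have := isProbabilityMeasure_bernoulliMeasure h0 h1
  have hinter : {f : V → Bool | ∀ k ∈ m, ∃ v ∈ s k, f v = true} =
      ⋂ k ∈ m, {f | ∃ v ∈ s k, f v = true} := by
    ext; simp
  rw [hinter, seedMeasure, measure_pi_biInter_of_dependsOn m hs]
  · exact prod_congr rfl fun k _ => seedMeasure_exists_true h0 h1 (s k)
  · intro k _ f g hfg
    show (∃ v ∈ s k, f v = true) = ∃ v ∈ s k, g v = true
    exact propext <| exists_congr fun v => and_congr_right fun hv => by rw [hfg v hv]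

end Seed

section Spreading
variable {V : Type*} {G : SimpleGraph V} {S : Set V}

def eventuallyBlack (G : SimpleGraph V) (S : Set V) : Set V := ⋃ t, (colorStep G)^[t] S

theorem isDynamo_of_forall_mem_eventuallyBlack (h : ∀ v, v ∈ eventuallyBlack G S) :
    IsDynamo G S :=
  fun v => Set.mem_iUnion.mp (h v)

theorem subset_eventuallyBlack : S ⊆ eventuallyBlack G S :=
  fun _ hv => Set.mem_iUnion.mpr ⟨0, hv⟩

theorem mem_eventuallyBlack_of_adj {v u w : V} (huw : u ≠ w) (hu : G.Adj v u) (hw : G.Adj v w)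
    (hu' : u ∈ eventuallyBlack G S) (hw' : w ∈ eventuallyBlack G S) :
    v ∈ eventuallyBlack G S := by
  obtain ⟨t, ht⟩ := Set.mem_iUnion.mp hu'
  obtain ⟨t', ht'⟩ := Set.mem_iUnion.mp hw'
  have hmono : Monotone fun t => (colorStep G)^[t] S :=
    fun _ _ h => Function.monotone_iterate_of_id_le (fun _ => Set.subset_union_left) h S
  refine Set.mem_iUnion.mpr ⟨max t t' + 1, ?_⟩
  rw [Function.iterate_succ_apply']
  exact Or.inr ⟨u, w, huw, hu, hw, hmono (le_max_left t t') ht, hmono (le_max_right t t') ht'⟩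

theorem mem_eventuallyBlack_of_path {c s : ℕ → V} {m i₀ : ℕ} (hi₀ : i₀ < m)
    (hseed : c i₀ ∈ eventuallyBlack G S) (hs : ∀ i < m, s i ∈ eventuallyBlack G S)
    (hc : ∀ i, i + 1 < m → G.Adj (c i) (c (i + 1))) (hcs : ∀ i < m, G.Adj (c i) (s i))
    (hne : ∀ i < m, ∀ j < m, c i ≠ s j) :
    ∀ i < m, c i ∈ eventuallyBlack G S := by
  intro i hi
  rcases le_total i₀ i with hle | hle
  · induction i, hle using Nat.le_induction with
    | base => exact hseed
    | succ i _ ih =>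
      exact mem_eventuallyBlack_of_adj (hne i (by omega) _ hi) (hc i hi).symm (hcs _ hi)
        (ih (by omega)) (hs _ hi)
  · clear hi
    induction hle using Nat.decreasingInduction with
    | self => exact hseed
    | of_succ i hi ih =>
      exact mem_eventuallyBlack_of_adj (hne _ (by omega) _ (by omega)) (hc i (by omega))
        (hcs i (by omega)) ih (hs i (by omega))

end Spreading

theorem ZMod.natCast_injOn_Iio {N : ℕ} : Set.InjOn (Nat.cast : ℕ → ZMod N) (Set.Iio N) :=
  fun u hu u' hu' h => by
    simpa [ZMod.val_natCast_of_lt hu, ZMod.val_natCast_of_lt hu'] using congrArg ZMod.val h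

section Torus
variable {N : ℕ}

def segFst (v : ZMod N × ZMod N) (m : ℕ) : Finset (ZMod N × ZMod N) :=
  (range m).image fun i : ℕ => (v.1 + i, v.2)

def segSnd (v : ZMod N × ZMod N) (m : ℕ) : Finset (ZMod N × ZMod N) :=
  (range m).image fun j : ℕ => (v.1, v.2 + j)

theorem segFst_mono (v : ZMod N × ZMod N) {m m' : ℕ} (h : m ≤ m') :
    segFst v m ⊆ segFst v m' :=
  image_subset_image (range_subset_range.mpr h)

theorem segSnd_mono (v : ZMod N × ZMod N) {m m' : ℕ} (h : m ≤ m') :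
    segSnd v m ⊆ segSnd v m' :=
  image_subset_image (range_subset_range.mpr h)

theorem card_segFst (v : ZMod N × ZMod N) {m : ℕ} (hm : m ≤ N) : #(segFst v m) = m := by
  refine (card_image_of_injOn fun i hi j hj h => ?_).trans (card_range m)
  exact ZMod.natCast_injOn_Iio (lt_of_lt_of_le (mem_range.mp hi) hm)
    (lt_of_lt_of_le (mem_range.mp hj) hm) (by simpa using h)

theorem card_segSnd (v : ZMod N × ZMod N) {m : ℕ} (hm : m ≤ N) : #(segSnd v m) = m := by
  refine (card_image_of_injOn fun i hi j hj h => ?_).trans (card_range m)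
  exact ZMod.natCast_injOn_Iio (lt_of_lt_of_le (mem_range.mp hi) hm)
    (lt_of_lt_of_le (mem_range.mp hj) hm) (by simpa using h)

variable [Fact (1 < N)]

theorem torus_adj_of_fst_eq_add_one {x x' : ZMod N} (y : ZMod N) (h : x' = x + 1) :
    (torus N).Adj (x, y) (x', y) := by
  subst h
  exact (SimpleGraph.fromRel_adj _ _ _).mpr ⟨by simp, Or.inl (Or.inl rfl)⟩

theorem torus_adj_of_snd_eq_add_one (x : ZMod N) {y y' : ZMod N} (h : y' = y + 1) :
    (torus N).Adj (x, y) (x, y') := by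
  subst h
  exact (SimpleGraph.fromRel_adj _ _ _).mpr ⟨by simp, Or.inl (Or.inr rfl)⟩

variable {S : Set (ZMod N × ZMod N)}

theorem mem_eventuallyBlack_of_segFst {x y : ZMod N} {m : ℕ}
    (hbelow : ∀ i < m, (x + (i : ZMod N), y) ∈ eventuallyBlack (torus N) S)
    (hseed : ∃ w ∈ segFst (x, y + 1) m, w ∈ S) :
    ∀ i < m, (x + (i : ZMod N), y + 1) ∈ eventuallyBlack (torus N) S := by
  obtain ⟨_, hw, hwS⟩ := hseed
  obtain ⟨i₀, hi₀, rfl⟩ := mem_image.mp hw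
  exact mem_eventuallyBlack_of_path (c := fun i : ℕ => (x + (i : ZMod N), y + 1))
    (mem_range.mp hi₀) (subset_eventuallyBlack hwS) hbelow
    (fun i _ => torus_adj_of_fst_eq_add_one _ (by push_cast; ring))
    (fun i _ => (torus_adj_of_snd_eq_add_one _ rfl).symm)
    (fun i _ j _ h => by simpa using congrArg Prod.snd h)

theorem mem_eventuallyBlack_of_segSnd {x y : ZMod N} {m : ℕ}
    (hleft : ∀ j < m, (x, y + (j : ZMod N)) ∈ eventuallyBlack (torus N) S)
    (hseed : ∃ w ∈ segSnd (x + 1, y) m, w ∈ S) :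
    ∀ j < m, (x + 1, y + (j : ZMod N)) ∈ eventuallyBlack (torus N) S := by
  obtain ⟨_, hw, hwS⟩ := hseed
  obtain ⟨j₀, hj₀, rfl⟩ := mem_image.mp hw
  exact mem_eventuallyBlack_of_path (c := fun j : ℕ => (x + 1, y + (j : ZMod N)))
    (mem_range.mp hj₀) (subset_eventuallyBlack hwS) hleft
    (fun j _ => torus_adj_of_snd_eq_add_one _ (by push_cast; ring))
    (fun j _ => (torus_adj_of_fst_eq_add_one _ rfl).symm)
    (fun i _ j _ h => by simpa using congrArg Prod.fst h)

theorem isDynamo_torus_of_shells (a b : ZMod N)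
    (hfst : ∀ k : ℕ, ∃ v ∈ segFst (a, b + (k : ZMod N) + 1) (k + 1), v ∈ S)
    (hsnd : ∀ k : ℕ, ∃ v ∈ segSnd (a + (k : ZMod N), b) (k + 1), v ∈ S) :
    IsDynamo (torus N) S := by
  have hsq : ∀ k : ℕ, ∀ i ≤ k, ∀ j ≤ k,
      (a + (i : ZMod N), b + (j : ZMod N)) ∈ eventuallyBlack (torus N) S := by
    intro k
    induction k with
    | zero =>
      obtain ⟨_, hv, hvS⟩ := hsnd 0
      obtain ⟨j, hj, rfl⟩ := mem_image.mp hv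
      rintro i hi j' hj'
      rw [mem_range, Nat.lt_one_iff] at hj
      obtain ⟨rfl, rfl, rfl⟩ : i = 0 ∧ j' = 0 ∧ j = 0 := by omega
      exact subset_eventuallyBlack hvS
    | succ k ih =>
      have hrow := mem_eventuallyBlack_of_segFst (m := k + 1)
        (fun i hi => ih i (by omega) k le_rfl) (hfst k)
      have hcol := mem_eventuallyBlack_of_segSnd (x := a + (k : ZMod N)) (m := k + 2)
        (fun j hj => ?_) (by simpa [add_assoc] using hsnd (k + 1))
      · intro i hi j hj
        rcases hi.lt_or_eq with hi | rfl
        · rcases hj.lt_or_eq with hj | rfl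
          · exact ih i (by omega) j (by omega)
          · simpa [add_assoc] using hrow i hi
        · simpa [add_assoc] using hcol j (by omega)
      · rcases Nat.lt_succ_iff_lt_or_eq.mp hj with hj | rfl
        · exact ih k le_rfl j (by omega)
        · simpa [add_assoc] using hrow k (by omega)
  refine isDynamo_of_forall_mem_eventuallyBlack fun v => ?_
  simpa using hsq N _ (v.1 - a).val_lt.le _ (v.2 - b).val_lt.le

end Torus

section Nucleus
variable {N : ℕ}

/-- Growing the black square `[a, a + k] × [b, b + k]` by one needs a seed in block `inl k`,
along its side with second coordinate `b + k + 1`, and one in block `inr (k + 1)`, along its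
side with first coordinate `a + k + 1`; block `inr 0` is the corner `(a, b)` itself. -/
def nucleusBlock (a b : ZMod N) : ℕ ⊕ ℕ → Finset (ZMod N × ZMod N)
  | .inl k => segFst (a, b + (k : ZMod N) + 1) (k + 1)
  | .inr k => segSnd (a + (k : ZMod N), b) (k + 1)

def IsNucleus (K : ℕ) (a b : ZMod N) (S : Set (ZMod N × ZMod N)) : Prop :=
  ∀ x ∈ (range K).disjSum (range K), ∃ v ∈ nucleusBlock a b x, v ∈ S

theorem isDynamo_of_isNucleus [Fact (1 < N)] {K : ℕ} {a b : ZMod N} {S : Set (ZMod N × ZMod N)}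
    (hnuc : IsNucleus K a b S) (hfst : ∀ v, ∃ w ∈ segFst v K, w ∈ S)
    (hsnd : ∀ v, ∃ w ∈ segSnd v K, w ∈ S) : IsDynamo (torus N) S := by
  refine isDynamo_torus_of_shells a b (fun k => ?_) (fun k => ?_)
  · by_cases hk : k < K
    · exact hnuc (.inl k) (by simp [hk])
    · obtain ⟨w, hw, hwS⟩ := hfst (a, b + (k : ZMod N) + 1)
      exact ⟨w, segFst_mono _ (by omega) hw, hwS⟩
  · by_cases hk : k < K
    · exact hnuc (.inr k) (by simp [hk])
    · obtain ⟨w, hw, hwS⟩ := hsnd (a + (k : ZMod N), b)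
      exact ⟨w, segSnd_mono _ (by omega) hw, hwS⟩

theorem compl_setOf_isDynamo_subset [Fact (1 < N)] (K M : ℕ) :
    {f : ZMod N × ZMod N → Bool | IsDynamo (torus N) {v | f v = true}}ᶜ ⊆
      {f | ∃ v, ∀ w ∈ segFst v K, f w = false} ∪
      {f | ∃ v, ∀ w ∈ segSnd v K, f w = false} ∪
      {f | ∀ rs ∈ range M ×ˢ range M,
        ¬ IsNucleus K ((K + 1) * rs.1 : ℕ) ((K + 1) * rs.2 : ℕ) {v | f v = true}} := by
  intro f hf
  by_contra hgood
  simp only [Set.mem_union, Set.mem_ofPred_eq, not_or, not_exists, not_forall, not_not,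
    Bool.not_eq_false, exists_prop] at hgood
  obtain ⟨⟨hfst, hsnd⟩, rs, -, hnuc⟩ := hgood
  exact hf (isDynamo_of_isNucleus hnuc hfst hsnd)

theorem pairwiseDisjoint_nucleusBlock {K : ℕ} (hKN : K < N) (a b : ZMod N) :
    ((range K).disjSum (range K) : Set (ℕ ⊕ ℕ)).PairwiseDisjoint (nucleusBlock a b) := by
  rintro (k | k) hx (k' | k') hy hne <;>
  simp only [mem_coe, inl_mem_disjSum, inr_mem_disjSum, mem_range] at hx hy <;>
  refine disjoint_left.mpr ?_ <;>
  simp only [nucleusBlock, segFst, segSnd, mem_image, mem_range] <;>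
  rintro _ ⟨i, hi, rfl⟩ ⟨j, hj, h⟩ <;>
  simp only [Prod.mk.injEq, add_assoc, ← Nat.cast_succ, add_right_inj] at h <;>
  obtain ⟨h1, h2⟩ := h <;>
  have e1 := ZMod.natCast_injOn_Iio (by simp; omega) (by simp; omega) h1 <;>
  have e2 := ZMod.natCast_injOn_Iio (by simp; omega) (by simp; omega) h2 <;>
  simp_all <;> omega

def squareAt (a b : ZMod N) (m : ℕ) : Finset (ZMod N × ZMod N) :=
  (range m ×ˢ range m).image fun ut => (a + (ut.1 : ZMod N), b + (ut.2 : ZMod N))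

theorem nucleusBlock_subset_squareAt {K : ℕ} (a b : ZMod N) {x : ℕ ⊕ ℕ}
    (hx : x ∈ (range K).disjSum (range K)) : nucleusBlock a b x ⊆ squareAt a b (K + 1) := by
  rcases x with k | k <;> simp only [inl_mem_disjSum, inr_mem_disjSum, mem_range] at hx <;>
  simp only [nucleusBlock, segFst, segSnd, squareAt, subset_iff, mem_image, mem_range,
    mem_product] <;>
  rintro _ ⟨i, hi, rfl⟩
  · exact ⟨(i, k + 1), ⟨by omega, by omega⟩, by simp [add_assoc]⟩
  · exact ⟨(k, i), ⟨by omega, by omega⟩, rfl⟩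

theorem dependsOn_isNucleus (K : ℕ) (a b : ZMod N) :
    DependsOn (· ∈ {f : ZMod N × ZMod N → Bool | IsNucleus K a b {v | f v = true}})
      (squareAt a b (K + 1)) := by
  intro f g hfg
  refine propext <| forall₂_congr fun x hx => exists_congr fun v => and_congr_right fun hv => ?_
  exact Eq.to_iff (congrArg (· = true) (hfg v (nucleusBlock_subset_squareAt a b hx hv)))

end Nucleus

section QPochhammer
open Real

theorem exp_neg_div_one_sub_exp_neg_le {x : ℝ} (hx : 0 < x) :
    exp (-x) / (1 - exp (-x)) ≤ 1 / x := by
  have hlt : exp (-x) < 1 := exp_lt_one_iff.mpr (neg_neg_of_pos hx)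
  rw [div_le_div_iff₀ (sub_pos.mpr hlt) hx]
  have h := mul_le_mul_of_nonneg_left (add_one_le_exp x) (exp_pos (-x)).le
  rw [← exp_add, neg_add_cancel, exp_zero] at h
  linarith

theorem sum_range_pow_succ_le {x : ℝ} (hx0 : 0 ≤ x) (hx1 : x < 1) (K : ℕ) :
    ∑ k ∈ range K, x ^ (k + 1) ≤ x / (1 - x) := by
  have h := geom_sum_Ico_le_of_lt_one (m := 1) (n := K + 1) hx0 hx1
  rw [sum_Ico_eq_sum_range, add_tsub_cancel_right, pow_one] at h
  simpa only [add_comm 1] using h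

theorem hasSum_one_div_succ_sq : HasSum (fun m : ℕ => 1 / ((m : ℝ) + 1) ^ 2) (π ^ 2 / 6) := by
  simpa using (hasSum_nat_add_iff' 1).mpr hasSum_zeta_two

theorem sum_neg_log_one_sub_pow_le {q : ℝ} (hq0 : 0 < q) (hq1 : q < 1) (K : ℕ) :
    ∑ k ∈ range K, -log (1 - q ^ (k + 1)) ≤ π ^ 2 / 6 / -log q := by
  set c := -log q
  have hc : 0 < c := neg_pos.mpr (log_neg hq0 hq1)
  have hlog : ∀ k ∈ range K, HasSum (fun m : ℕ => (q ^ (k + 1)) ^ (m + 1) / (m + 1))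
      (-log (1 - q ^ (k + 1))) := fun k _ => hasSum_pow_div_log_of_abs_lt_one <| by
    rw [abs_of_pos (pow_pos hq0 _)]
    exact pow_lt_one₀ hq0.le hq1 (Nat.succ_ne_zero k)
  have hterm : ∀ m : ℕ, ∑ k ∈ range K, (q ^ (k + 1)) ^ (m + 1) / (m + 1) ≤
      1 / (c * ((m : ℝ) + 1) ^ 2) := by
    intro m
    have hm : (0 : ℝ) < m + 1 := by positivity
    have hqm : q ^ (m + 1) = exp (-(c * (m + 1))) := by
      rw [neg_mul_eq_neg_mul, neg_neg, exp_mul, exp_log hq0, ← rpow_natCast]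
      push_cast; ring_nf
    calc ∑ k ∈ range K, (q ^ (k + 1)) ^ (m + 1) / (m + 1)
        = (∑ k ∈ range K, (q ^ (m + 1)) ^ (k + 1)) / (m + 1) := by
          rw [sum_div]; simp_rw [← pow_mul, mul_comm]
      _ ≤ q ^ (m + 1) / (1 - q ^ (m + 1)) / (m + 1) := by
          gcongr
          exact sum_range_pow_succ_le (by positivity) (pow_lt_one₀ hq0.le hq1 m.succ_ne_zero) K
      _ ≤ 1 / (c * (m + 1)) / (m + 1) := by
          rw [hqm]
          exact div_le_div_of_nonneg_right (exp_neg_div_one_sub_exp_neg_le (by positivity)) hm.le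
      _ = 1 / (c * ((m : ℝ) + 1) ^ 2) := by
          field_simp
  have hbasel : HasSum (fun m : ℕ => 1 / (c * ((m : ℝ) + 1) ^ 2)) (π ^ 2 / 6 / c) := by
    simpa only [div_div, mul_comm] using hasSum_one_div_succ_sq.div_const c
  exact hasSum_le hterm (hasSum_sum hlog) hbasel

/-- The `q`-Pochhammer symbol `(q; q)_K`. -/
def qPochhammer (q : ℝ) (K : ℕ) : ℝ := ∏ k ∈ range K, (1 - q ^ (k + 1))

theorem qPochhammer_nonneg {q : ℝ} (hq0 : 0 ≤ q) (hq1 : q ≤ 1) (K : ℕ) :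
    0 ≤ qPochhammer q K :=
  prod_nonneg fun _ _ => sub_nonneg.mpr (pow_le_one₀ hq0 hq1)

theorem qPochhammer_le_one {q : ℝ} (hq0 : 0 ≤ q) (hq1 : q ≤ 1) (K : ℕ) :
    qPochhammer q K ≤ 1 :=
  prod_le_one (fun _ _ => sub_nonneg.mpr (pow_le_one₀ hq0 hq1))
    fun _ _ => sub_le_self _ (pow_nonneg hq0 _)

theorem qPochhammer_sq_le_one {q : ℝ} (hq0 : 0 ≤ q) (hq1 : q ≤ 1) (K : ℕ) :
    qPochhammer q K ^ 2 ≤ 1 :=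
  pow_le_one₀ (qPochhammer_nonneg hq0 hq1 K) (qPochhammer_le_one hq0 hq1 K)

theorem exp_neg_le_qPochhammer {p : ℝ} (hp0 : 0 < p) (hp1 : p ≤ 1) (K : ℕ) :
    exp (-(π ^ 2 / 6) / p) ≤ qPochhammer (1 - p) K := by
  rcases hp1.lt_or_eq with hp1 | rfl
  · have hq0 : 0 < 1 - p := by linarith
    have hq1 : 1 - p < 1 := by linarith
    have hc : p ≤ -log (1 - p) := by linarith [log_le_sub_one_of_pos hq0]
    have hsum := sum_neg_log_one_sub_pow_le hq0 hq1 K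
    rw [sum_neg_distrib] at hsum
    calc exp (-(π ^ 2 / 6) / p) ≤ exp (-(π ^ 2 / 6 / -log (1 - p))) := by
          rw [exp_le_exp, neg_div, neg_le_neg_iff]
          exact div_le_div_of_nonneg_left (by positivity) hp0 hc
      _ ≤ exp (∑ k ∈ range K, log (1 - (1 - p) ^ (k + 1))) := exp_le_exp.mpr (by linarith)
      _ = qPochhammer (1 - p) K := by
          rw [exp_sum]
          exact prod_congr rfl fun k _ =>
            exp_log (sub_pos.mpr (pow_lt_one₀ hq0.le hq1 k.succ_ne_zero))
  · have h : qPochhammer (1 - 1) K = 1 := by simp [qPochhammer]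
    rw [h, exp_le_one_iff, div_one, neg_nonpos]
    positivity

end QPochhammer

section TorusProbability
variable {N : ℕ}

theorem pairwiseDisjoint_squareAt {m M : ℕ} (hmM : M * m ≤ N) :
    ((range M ×ˢ range M : Finset (ℕ × ℕ)) : Set (ℕ × ℕ)).PairwiseDisjoint
      fun rs => squareAt ((m * rs.1 : ℕ) : ZMod N) ((m * rs.2 : ℕ) : ZMod N) m := by
  have hcoord : ∀ {r r' u u' : ℕ}, r < M → r' < M → u < m → u' < m →
      ((m * r : ℕ) : ZMod N) + (u : ℕ) = ((m * r' : ℕ) : ZMod N) + (u' : ℕ) → r = r' := by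
    intro r r' u u' hr hr' hu hu' h
    rw [← Nat.cast_add, ← Nat.cast_add] at h
    have h' := ZMod.natCast_injOn_Iio
      ((Nat.mul_add_lt_mul_of_lt_of_lt hr hu).trans_le hmM)
      ((Nat.mul_add_lt_mul_of_lt_of_lt hr' hu').trans_le hmM) h
    have hm : 0 < m := by omega
    simpa [Nat.mul_add_div hm, Nat.div_eq_of_lt hu, Nat.div_eq_of_lt hu'] using
      congrArg (· / m) h'
  rintro ⟨r, s⟩ hrs ⟨r', s'⟩ hrs' hne
  simp only [coe_product, coe_range, Set.mem_prod, Set.mem_Iio] at hrs hrs'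
  refine disjoint_left.mpr ?_
  simp only [squareAt, mem_image, mem_product, mem_range]
  rintro _ ⟨⟨u, t⟩, ⟨hu, ht⟩, rfl⟩ ⟨⟨u', t'⟩, ⟨hu', ht'⟩, h⟩
  simp only [Prod.mk.injEq] at h
  exact hne (Prod.ext (hcoord hrs'.1 hrs.1 hu' hu h.1).symm (hcoord hrs'.2 hrs.2 ht' ht h.2).symm)

variable [NeZero N] {p : ℝ}

theorem seedMeasure_isNucleus (h0 : 0 ≤ p) (h1 : p ≤ 1) {K : ℕ} (hKN : K < N) (a b : ZMod N) :
    seedMeasure (ZMod N × ZMod N) p {f | IsNucleus K a b {v | f v = true}} =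
      ENNReal.ofReal (qPochhammer (1 - p) K ^ 2) := by
  have hfactor : ∀ k, 0 ≤ 1 - (1 - p) ^ (k + 1) := fun k =>
    sub_nonneg.mpr (pow_le_one₀ (by linarith) (by linarith))
  rw [sq, qPochhammer, ENNReal.ofReal_mul (prod_nonneg fun k _ => hfactor k),
    ENNReal.ofReal_prod_of_nonneg fun k _ => hfactor k]
  refine (seedMeasure_forall_exists_true h0 h1 _ (pairwiseDisjoint_nucleusBlock hKN a b)).trans ?_
  rw [prod_disjSum]
  congr 1 <;> refine prod_congr rfl fun k hk => ?_ <;> rw [mem_range] at hk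
  · rw [nucleusBlock, card_segFst _ (by omega)]
  · rw [nucleusBlock, card_segSnd _ (by omega)]

theorem seedMeasure_forall_not_isNucleus (h0 : 0 ≤ p) (h1 : p ≤ 1) {K M : ℕ} (hM : 0 < M)
    (hKM : M * (K + 1) ≤ N) :
    seedMeasure (ZMod N × ZMod N) p {f | ∀ rs ∈ range M ×ˢ range M,
        ¬ IsNucleus K ((K + 1) * rs.1 : ℕ) ((K + 1) * rs.2 : ℕ) {v | f v = true}} =
      ENNReal.ofReal ((1 - qPochhammer (1 - p) K ^ 2) ^ (M * M)) := by
  have := isProbabilityMeasure_bernoulliMeasure h0 h1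
  have := isProbabilityMeasure_seedMeasure (V := ZMod N × ZMod N) h0 h1
  have hKN : K < N := (Nat.le_mul_of_pos_left (K + 1) hM).trans hKM
  have hr := qPochhammer_sq_le_one (sub_nonneg.mpr h1) (by linarith) K
  have hinter : {f : ZMod N × ZMod N → Bool | ∀ rs ∈ range M ×ˢ range M,
        ¬ IsNucleus K ((K + 1) * rs.1 : ℕ) ((K + 1) * rs.2 : ℕ) {v | f v = true}} =
      ⋂ rs ∈ range M ×ˢ range M,
        {f | IsNucleus K ((K + 1) * rs.1 : ℕ) ((K + 1) * rs.2 : ℕ) {v | f v = true}}ᶜ := by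
    ext; simp
  have hdep : ∀ rs : ℕ × ℕ, rs ∈ range M ×ˢ range M →
      DependsOn (· ∈ {f : ZMod N × ZMod N → Bool |
        IsNucleus K ((K + 1) * rs.1 : ℕ) ((K + 1) * rs.2 : ℕ) {v | f v = true}}ᶜ)
        (squareAt (((K + 1) * rs.1 : ℕ) : ZMod N) (((K + 1) * rs.2 : ℕ) : ZMod N) (K + 1)) :=
    fun _ _ _ _ h => congrArg Not (dependsOn_isNucleus _ _ _ h)
  rw [hinter, seedMeasure, measure_pi_biInter_of_dependsOn _ (pairwiseDisjoint_squareAt hKM) hdep,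
    ← seedMeasure]
  simp only [prob_compl_eq_one_sub (Set.toFinite _).measurableSet,
    seedMeasure_isNucleus h0 h1 hKN]
  rw [prod_const, card_product, card_range, ENNReal.ofReal_pow (sub_nonneg.mpr hr),
    ENNReal.ofReal_sub _ (sq_nonneg _), ENNReal.ofReal_one]

theorem seedMeasure_not_isDynamo_le [Fact (1 < N)] (h0 : 0 ≤ p) (h1 : p ≤ 1) {K M : ℕ}
    (hM : 0 < M) (hKM : M * (K + 1) ≤ N) :
    seedMeasure (ZMod N × ZMod N) p {f | IsDynamo (torus N) {v | f v = true}}ᶜ ≤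
      ENNReal.ofReal (2 * N ^ 2 * (1 - p) ^ K + (1 - qPochhammer (1 - p) K ^ 2) ^ (M * M)) := by
  have hKN : K ≤ N := by nlinarith
  have hr := qPochhammer_sq_le_one (sub_nonneg.mpr h1) (by linarith) K
  have hseg : ∀ s : ZMod N × ZMod N → Finset (ZMod N × ZMod N), (∀ v, #(s v) = K) →
      seedMeasure (ZMod N × ZMod N) p {f | ∃ v, ∀ w ∈ s v, f w = false} ≤
        ENNReal.ofReal (N ^ 2 * (1 - p) ^ K) := fun s hs => by
    refine (seedMeasure_exists_forall_false_le h0 h1 hs).trans_eq ?_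
    rw [ENNReal.ofReal_mul (by positivity), ENNReal.ofReal_pow (Nat.cast_nonneg _)]
    simp [sq]
  calc _ ≤ _ := measure_mono (compl_setOf_isDynamo_subset K M)
    _ ≤ _ := (measure_union_le _ _).trans (add_le_add (measure_union_le _ _) le_rfl)
    _ ≤ ENNReal.ofReal (N ^ 2 * (1 - p) ^ K) + ENNReal.ofReal (N ^ 2 * (1 - p) ^ K) +
          ENNReal.ofReal ((1 - qPochhammer (1 - p) K ^ 2) ^ (M * M)) := by
        gcongr
        · exact hseg _ fun v => card_segFst v hKN
        · exact hseg _ fun v => card_segSnd v hKN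
        · exact (seedMeasure_forall_not_isNucleus h0 h1 hM hKM).le
    _ = _ := by
        rw [← ENNReal.ofReal_add (by positivity) (by positivity),
          ← ENNReal.ofReal_add (by positivity) (pow_nonneg (sub_nonneg.mpr hr) _)]
        ring_nf

end TorusProbability

section Asymptotics
open Real

theorem one_sub_pow_le_exp_neg_mul {x : ℝ} (hx : x ≤ 1) (n : ℕ) :
    (1 - x) ^ n ≤ exp (-(x * n)) := by
  calc (1 - x) ^ n ≤ exp (-x) ^ n :=
        pow_le_pow_left₀ (sub_nonneg.mpr hx) (one_sub_le_exp_neg x) n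
    _ = exp (-(x * n)) := by rw [← exp_nat_mul]; ring_nf

theorem natCast_sq_mul_one_sub_pow_le {N K : ℕ} {p : ℝ} (hL : 0 < log N)
    (hp : 1.65 / log N ≤ p) (hp1 : p ≤ 1) (hK : 2 * log N ^ 2 ≤ K) :
    (N : ℝ) ^ 2 * (1 - p) ^ K ≤ exp (-1.3 * log N) := by
  have hN : (1 : ℝ) < N := (log_pos_iff N.cast_nonneg).mp hL
  have hp0 : 0 < p := lt_of_lt_of_le (by positivity) hp
  have hpK : 3.3 * log N ≤ p * K := by
    calc 3.3 * log N = 1.65 / log N * (2 * log N ^ 2) := by field_simp; ring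
      _ ≤ p * K := by gcongr
  calc (N : ℝ) ^ 2 * (1 - p) ^ K ≤ exp (2 * log N) * exp (-(p * K)) := by
        rw [show (2 : ℝ) * log N = ((2 : ℕ) : ℝ) * log N by norm_num, exp_nat_mul,
          exp_log (by linarith)]
        gcongr
        exact one_sub_pow_le_exp_neg_mul hp1 K
    _ = exp (2 * log N - p * K) := by rw [← exp_add]; ring_nf
    _ ≤ exp (-1.3 * log N) := exp_le_exp.mpr (by linarith)

theorem one_sub_sq_qPochhammer_pow_le {N K M : ℕ} {p : ℝ} (hL : 0 < log N)
    (hp : 1.65 / log N ≤ p) (hp1 : p ≤ 1) (hM : N / (6 * log N ^ 2) ≤ M) :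
    (1 - qPochhammer (1 - p) K ^ 2) ^ (M * M) ≤
      exp (-(exp ((2 - π ^ 2 / 4.95) * log N) / (36 * log N ^ 4))) := by
  set L := log N
  have hN : (1 : ℝ) < N := (log_pos_iff N.cast_nonneg).mp hL
  have hp0 : 0 < p := lt_of_lt_of_le (by positivity) hp
  have hr : exp (-(π ^ 2 / 9.9) * L) ≤ qPochhammer (1 - p) K := by
    refine le_trans (exp_le_exp.mpr ?_) (exp_neg_le_qPochhammer hp0 hp1 K)
    have hpL : 1 / p ≤ L / 1.65 := by
      rw [div_le_div_iff₀ hp0 (by norm_num)]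
      rw [div_le_iff₀ hL] at hp
      linarith
    calc -(π ^ 2 / 9.9) * L = -(π ^ 2 / 6) * (L / 1.65) := by ring
      _ ≤ -(π ^ 2 / 6) * (1 / p) := mul_le_mul_of_nonpos_left hpL (by nlinarith [pi_pos])
      _ = -(π ^ 2 / 6) / p := by ring
  have hr2 : exp (-(π ^ 2 / 4.95) * L) ≤ qPochhammer (1 - p) K ^ 2 := by
    calc exp (-(π ^ 2 / 4.95) * L) = exp (-(π ^ 2 / 9.9) * L) ^ 2 := by
          rw [← exp_nat_mul]; ring_nf
      _ ≤ _ := pow_le_pow_left₀ (exp_pos _).le hr 2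
  have hM2 : exp (2 * L) / (36 * L ^ 4) ≤ (M * M : ℕ) := by
    have hexp : exp (2 * L) = (N : ℝ) ^ 2 := by
      rw [show (2 : ℝ) * L = ((2 : ℕ) : ℝ) * L by norm_num, exp_nat_mul,
        exp_log (by linarith)]
    calc exp (2 * L) / (36 * L ^ 4) = (N / (6 * L ^ 2) : ℝ) * (N / (6 * L ^ 2)) := by
          rw [hexp]; ring
      _ ≤ (M * M : ℝ) := mul_le_mul hM hM (by positivity) (by positivity)
      _ = (M * M : ℕ) := by push_cast; ring
  calc (1 - qPochhammer (1 - p) K ^ 2) ^ (M * M)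
      ≤ exp (-(qPochhammer (1 - p) K ^ 2 * (M * M : ℕ))) := one_sub_pow_le_exp_neg_mul
        (qPochhammer_sq_le_one (by linarith) (by linarith) K) _
    _ ≤ exp (-(exp ((2 - π ^ 2 / 4.95) * L) / (36 * L ^ 4))) := by
      rw [exp_le_exp, neg_le_neg_iff]
      calc exp ((2 - π ^ 2 / 4.95) * L) / (36 * L ^ 4)
          = exp (-(π ^ 2 / 4.95) * L) * (exp (2 * L) / (36 * L ^ 4)) := by
            rw [mul_div_assoc', ← exp_add]; ring_nf
        _ ≤ _ := mul_le_mul hr2 hM2 (by positivity) (by positivity)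

theorem div_six_mul_log_sq_le_natCast_div {N K : ℕ} (hL : 2 ≤ log N) (hN : 6 * log N ^ 2 ≤ N)
    (hK : (K : ℝ) < 2 * log N ^ 2 + 1) : N / (6 * log N ^ 2) ≤ ((N / (K + 1) : ℕ) : ℝ) := by
  set L := log N
  have hK3 : (K : ℝ) + 1 ≤ 3 * L ^ 2 := by nlinarith
  have hone : 1 ≤ (N : ℝ) / (6 * L ^ 2) := by rw [one_le_div (by positivity)]; exact hN
  have hfloor := Nat.sub_one_lt_floor ((N : ℝ) / ((K + 1 : ℕ) : ℝ))
  rw [Nat.floor_div_eq_div] at hfloor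
  calc (N : ℝ) / (6 * L ^ 2) = N / (3 * L ^ 2) - N / (6 * L ^ 2) := by field_simp; ring
    _ ≤ N / ((K + 1 : ℕ) : ℝ) - 1 := by
      push_cast
      gcongr
    _ ≤ _ := hfloor.le

theorem eventually_six_mul_log_sq_le : ∀ᶠ x : ℝ in atTop, 6 * log x ^ 2 ≤ x := by
  filter_upwards [isLittleO_pow_log_id_atTop.bound (by norm_num : (0 : ℝ) < 1 / 6),
    eventually_ge_atTop 0] with x hx hx0
  rw [norm_of_nonneg (sq_nonneg _), id, norm_of_nonneg hx0] at hx
  linarith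

theorem seedMeasure_not_isDynamo_le_exp {N : ℕ} [NeZero N] {p : ℝ} (hL : 2 ≤ log N)
    (hN : 6 * log N ^ 2 ≤ N) (hp : 1.65 / log N ≤ p) (hp1 : p ≤ 1) :
    seedMeasure (ZMod N × ZMod N) p {f | IsDynamo (torus N) {v | f v = true}}ᶜ ≤
      ENNReal.ofReal (2 * exp (-1.3 * log N) +
        exp (-(exp ((2 - π ^ 2 / 4.95) * log N) / (36 * log N ^ 4)))) := by
  have : Fact (1 < N) := ⟨by exact_mod_cast (log_pos_iff N.cast_nonneg).mp (by linarith)⟩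
  have hp0 : 0 < p := lt_of_lt_of_le (by positivity) hp
  set K := ⌈2 * log N ^ 2⌉₊
  have hM := div_six_mul_log_sq_le_natCast_div (K := K) hL hN (Nat.ceil_lt_add_one (by positivity))
  have hM0 : 0 < N / (K + 1) := by
    have : (1 : ℝ) ≤ N / (6 * log N ^ 2) := by rw [one_le_div (by positivity)]; exact hN
    exact_mod_cast this.trans_lt' one_pos |>.trans_le hM
  refine (seedMeasure_not_isDynamo_le hp0.le hp1 hM0 (Nat.div_mul_le_self N (K + 1))).trans
    (ENNReal.ofReal_le_ofReal ?_)
  have h1 := natCast_sq_mul_one_sub_pow_le (by linarith) hp hp1 (Nat.le_ceil (2 * log N ^ 2))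
  have h2 := one_sub_sq_qPochhammer_pow_le (K := K) (by linarith) hp hp1 hM
  linarith

theorem tendsto_two_mul_exp_add_exp_neg_exp :
    Tendsto (fun L => 2 * exp (-1.3 * L) +
      exp (-(exp ((2 - π ^ 2 / 4.95) * L) / (36 * L ^ 4)))) atTop (nhds 0) := by
  have hδ : 0 < 2 - π ^ 2 / 4.95 := by
    rw [sub_pos, div_lt_iff₀ (by norm_num)]
    nlinarith [pi_pos, pi_lt_d4]
  have h1 : Tendsto (fun L => exp (-1.3 * L)) atTop (nhds 0) :=
    tendsto_exp_atBot.comp (tendsto_id.const_mul_atTop_of_neg (by norm_num))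
  have h2 : Tendsto (fun L => exp ((2 - π ^ 2 / 4.95) * L) / (36 * L ^ 4)) atTop atTop := by
    set δ := 2 - π ^ 2 / 4.95
    refine (((tendsto_exp_div_pow_atTop 4).comp (tendsto_id.const_mul_atTop hδ)).atTop_mul_const
      (by positivity : 0 < δ ^ 4 / 36)).congr' ?_
    filter_upwards [eventually_gt_atTop 0] with L hL
    simp only [Function.comp_apply, id]
    field_simp
  simpa using (h1.const_mul 2).add (tendsto_exp_atBot.comp (tendsto_neg_atTop_atBot.comp h2))

theorem tendsto_seedMeasure_not_isDynamo {p : ℕ → ℝ}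
    (hp : ∀ᶠ n : ℕ in atTop, 1.65 / log n ≤ p n ∧ p n ≤ 1) :
    Tendsto (fun n : ℕ => seedMeasure (ZMod (n + 1) × ZMod (n + 1)) (p (n + 1))
      {f | IsDynamo (torus (n + 1)) {v | f v = true}}ᶜ) atTop (nhds 0) := by
  have hN : Tendsto (fun n : ℕ => ((n + 1 : ℕ) : ℝ)) atTop atTop :=
    tendsto_natCast_atTop_atTop.comp (tendsto_add_atTop_nat 1)
  have hL := tendsto_log_atTop.comp hN
  have hgood : ∀ᶠ n : ℕ in atTop, 2 ≤ log (n + 1 : ℕ) ∧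
      6 * log (n + 1 : ℕ) ^ 2 ≤ (n + 1 : ℕ) ∧
      1.65 / log (n + 1 : ℕ) ≤ p (n + 1) ∧ p (n + 1) ≤ 1 :=
    (hL.eventually_ge_atTop 2).and ((hN.eventually eventually_six_mul_log_sq_le).and
      ((tendsto_add_atTop_nat 1).eventually hp))
  exact tendsto_of_tendsto_of_tendsto_of_le_of_le' tendsto_const_nhds
    (by simpa using ENNReal.tendsto_ofReal (tendsto_two_mul_exp_add_exp_neg_exp.comp hL))
    (Eventually.of_forall fun _ => bot_le)
    (hgood.mono fun _ ⟨hL2, hsq, hp0, hp1⟩ => seedMeasure_not_isDynamo_le_exp hL2 hsq hp0 hp1)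

end Asymptotics

/-- If `1.65 / ln n ≤ p n ≤ 1` for all sufficiently large `n`, then the probability
that the random seed set `S^p` is a dynamo on the toroidal mesh of size `n` tends to `1`. -/
theorem torus_dynamo_whp (p : ℕ → ℝ)
    (hp : ∀ᶠ n : ℕ in atTop, 1.65 / Real.log n ≤ p n ∧ p n ≤ 1) :
    Tendsto
      (fun n : ℕ =>
        seedMeasure (ZMod (n + 1) × ZMod (n + 1)) (p (n + 1))
          {f | IsDynamo (torus (n + 1)) {v | f v = true}})
      atTop (nhds 1) := by
  have hcompl := ENNReal.Tendsto.sub (tendsto_const_nhds (x := 1))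
    (tendsto_seedMeasure_not_isDynamo hp) (Or.inl ENNReal.one_ne_top)
  rw [tsub_zero] at hcompl
  refine hcompl.congr' (((tendsto_add_atTop_nat 1).eventually hp).mono fun n ⟨hp0, hp1⟩ => ?_)
  have := isProbabilityMeasure_seedMeasure (V := ZMod (n + 1) × ZMod (n + 1))
    ((div_nonneg (by norm_num) (Real.log_natCast_nonneg _)).trans hp0) hp1
  rw [prob_compl_eq_one_sub (Set.toFinite _).measurableSet,
    ENNReal.sub_sub_cancel ENNReal.one_ne_top prob_le_one]
end

section
/- Let H be the toroidal mesh of size n, run under the majority coloring process of threshold 2. Let S_H be a seed set and let t be a time such that the coloring process started from S_H is constant from time t on (S_u = S_t for all u ≥ t). Let S*_H be another seed set with S_H ⊆ S*_H and set D = S*_H \ S_H. Then every vertex that first turns black at a time u > t in the coloring process started from S*_H lies at graph distance at most 2u from some vertex of D. -/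
lemma colorStep_subset {V : Type*} (G : SimpleGraph V) (S : Set V) :
    S ⊆ colorStep G S := Set.subset_union_left

lemma colorStep_mono {V : Type*} (G : SimpleGraph V) {S S' : Set V} (h : S ⊆ S') :
    colorStep G S ⊆ colorStep G S' := by
  intro v hv
  simp only [colorStep, Set.mem_union, Set.mem_setOf_eq] at hv ⊢
  rcases hv with hv | ⟨a, b, hab, h1, h2, ha, hb⟩
  · exact Or.inl (h hv)
  · exact Or.inr ⟨a, b, hab, h1, h2, h ha, h hb⟩

lemma iterate_mono {V : Type*} (G : SimpleGraph V) {S S' : Set V} (h : S ⊆ S') (k : ℕ) :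
    (colorStep G)^[k] S ⊆ (colorStep G)^[k] S' := by
  induction k with
  | zero => exact h
  | succ k ih =>
    rw [Function.iterate_succ_apply', Function.iterate_succ_apply']
    exact colorStep_mono G ih

lemma iterate_time_mono {V : Type*} (G : SimpleGraph V) (S : Set V) {a b : ℕ} (h : a ≤ b) :
    (colorStep G)^[a] S ⊆ (colorStep G)^[b] S := by
  induction b with
  | zero => simp [Nat.le_zero.mp h]
  | succ b ih =>
    rcases Nat.lt_or_ge a (b + 1) with hb | hb
    · rw [Function.iterate_succ_apply']
      exact (ih (Nat.lt_succ_iff.mp hb)).trans (colorStep_subset G _)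
    · have : a = b + 1 := le_antisymm h hb
      subst this; exact Set.Subset.rfl

lemma key_walk {V : Type*} (G : SimpleGraph V) {SH SstarH : Set V} :
    ∀ u v, v ∈ (colorStep G)^[u] SstarH → v ∉ (colorStep G)^[u] SH →
      ∃ d ∈ SstarH \ SH, ∃ p : G.Walk v d, p.length ≤ u := by
  intro u
  induction u with
  | zero =>
    intro v hv1 hv2
    exact ⟨v, ⟨hv1, hv2⟩, SimpleGraph.Walk.nil, le_rfl⟩
  | succ u ih =>
    intro v hv1 hv2
    rw [Function.iterate_succ_apply'] at hv1 hv2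
    by_cases hvS : v ∈ (colorStep G)^[u] SstarH
    · have hvH : v ∉ (colorStep G)^[u] SH := fun h => hv2 (colorStep_subset G _ h)
      obtain ⟨d, hd, p, hp⟩ := ih v hvS hvH
      exact ⟨d, hd, p, hp.trans (Nat.le_succ u)⟩
    · simp only [colorStep, Set.mem_union, Set.mem_setOf_eq] at hv1
      rcases hv1 with hv1 | ⟨a, b, hab, h1, h2, ha, hb⟩
      · exact absurd hv1 hvS
      · have : a ∉ (colorStep G)^[u] SH ∨ b ∉ (colorStep G)^[u] SH := by
          by_contra hc
          push_neg at hc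
          exact hv2 (Or.inr ⟨a, b, hab, h1, h2, hc.1, hc.2⟩)
        rcases this with hna | hnb
        · obtain ⟨d, hd, p, hp⟩ := ih a ha hna
          exact ⟨d, hd, SimpleGraph.Walk.cons h1 p, by simpa using Nat.succ_le_succ hp⟩
        · obtain ⟨d, hd, p, hp⟩ := ih b hb hnb
          exact ⟨d, hd, SimpleGraph.Walk.cons h2 p, by simpa using Nat.succ_le_succ hp⟩

/-- If the coloring process started from `S_H` on the toroidal mesh is constant from
time `t` on, and `S_H ⊆ S*_H`, then every vertex that first turns black at a time
`u > t` in the process started from `S*_H` is at graph distance at most `2u` from some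
vertex of `D = S*_H \ S_H`. -/
theorem influence_distance (n : ℕ) (SH SstarH : Set (ZMod n × ZMod n))
    (hsub : SH ⊆ SstarH) (t : ℕ)
    (ht : ∀ u : ℕ, t ≤ u →
      (colorStep (torus n))^[u] SH = (colorStep (torus n))^[t] SH)
    (u : ℕ) (hu : t < u) (v : ZMod n × ZMod n)
    (hv1 : v ∈ (colorStep (torus n))^[u] SstarH)
    (hv2 : v ∉ (colorStep (torus n))^[u - 1] SstarH) :
    ∃ d ∈ SstarH \ SH, (torus n).dist v d ≤ 2 * u := by
  have hvH : v ∉ (colorStep (torus n))^[u] SH := by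
    intro h
    rw [ht u hu.le] at h
    have h1 : v ∈ (colorStep (torus n))^[t] SstarH := iterate_mono _ hsub t h
    have h2 : t ≤ u - 1 := Nat.le_sub_one_of_lt hu
    exact hv2 (iterate_time_mono _ _ h2 h1)
  obtain ⟨d, hd, p, hp⟩ := key_walk (torus n) u v hv1 hvH
  refine ⟨d, hd, ?_⟩
  calc (torus n).dist v d ≤ p.length := SimpleGraph.dist_le p
    _ ≤ u := hp
    _ ≤ 2 * u := by omega
end

section
/- For every real q with 0 < q < 1 and p = 1 − q, the infinite product satisfies ∏_{i=1}^∞ (1 − q^i)^4 ≥ exp( −(2π²/3) · q/p ). -/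
/-!
Taking logarithms and expanding `-log (1 - x) = ∑ₙ xⁿ⁺¹/(n+1)`, then summing over `i` first,
`-log ∏ᵢ (1 - qⁱ⁺¹) = ∑ₙ (1/(n+1)) · qⁿ⁺¹/(1 - qⁿ⁺¹)`. Since
`1 - qⁿ⁺¹ = (1 - q)(1 + q + ⋯ + qⁿ) ≥ (n+1) qⁿ (1 - q)`, the `n`-th term is at most
`(q/(1-q)) / (n+1)²`, and `∑ 1/(n+1)² = π²/6` bounds each partial product; the partial products
decrease, so the bound passes to the limit.
-/

open Filter Real Finset Topology

lemma one_sub_pow_succ_ge {R : Type*} [CommRing R] [LinearOrder R] [IsStrictOrderedRing R]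
    {q : R} (h0 : 0 ≤ q) (h1 : q ≤ 1) (n : ℕ) :
    (n + 1) * q ^ n * (1 - q) ≤ 1 - q ^ (n + 1) := by
  rw [← geom_sum_mul_of_le_one h1]
  refine mul_le_mul_of_nonneg_right ?_ (sub_nonneg.mpr h1)
  calc (n + 1) * q ^ n = ∑ _i ∈ range (n + 1), q ^ n := by simp
    _ ≤ ∑ i ∈ range (n + 1), q ^ i :=
      sum_le_sum fun i hi => pow_le_pow_of_le_one h0 h1 (Nat.le_of_lt_succ (mem_range.mp hi))

lemma pow_succ_div_one_sub_pow_succ_le {q : ℝ} (h0 : 0 ≤ q) (h1 : q < 1) (n : ℕ) :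
    q ^ (n + 1) / (1 - q ^ (n + 1)) ≤ q / ((n + 1) * (1 - q)) := by
  have hqn : q ^ (n + 1) < 1 := pow_lt_one₀ h0 h1 n.succ_ne_zero
  rw [div_le_div_iff₀ (by linarith) (by nlinarith)]
  calc q ^ (n + 1) * ((n + 1) * (1 - q)) = q * ((n + 1) * q ^ n * (1 - q)) := by ring
    _ ≤ q * (1 - q ^ (n + 1)) := by gcongr; exact one_sub_pow_succ_ge h0 h1.le n

lemma sum_range_pow_succ_le_s10 {r : ℝ} (h0 : 0 ≤ r) (h1 : r < 1) (m : ℕ) :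
    ∑ i ∈ range m, r ^ (i + 1) ≤ r / (1 - r) := by
  simpa [sum_Ico_eq_sum_range, add_comm] using geom_sum_Ico_le_of_lt_one (m := 1) (n := m + 1) h0 h1

lemma hasSum_inv_succ_sq : HasSum (fun n : ℕ => 1 / ((n : ℝ) + 1) ^ 2) (π ^ 2 / 6) := by
  simpa using (hasSum_nat_add_iff' 1).mpr hasSum_zeta_two

/-- The `n`-th term of the series for `-log ∏ᵢ (1 - qⁱ⁺¹)` after summing over `i` first. -/
lemma sum_range_pow_pow_div_le {q : ℝ} (h0 : 0 ≤ q) (h1 : q < 1) (m n : ℕ) :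
    ∑ i ∈ range m, (q ^ (i + 1)) ^ (n + 1) / (n + 1) ≤ q / (1 - q) * (1 / ((n : ℝ) + 1) ^ 2) := by
  have hr0 : 0 ≤ q ^ (n + 1) := pow_nonneg h0 _
  have hr1 : q ^ (n + 1) < 1 := pow_lt_one₀ h0 h1 n.succ_ne_zero
  calc ∑ i ∈ range m, (q ^ (i + 1)) ^ (n + 1) / (n + 1)
      = (∑ i ∈ range m, (q ^ (n + 1)) ^ (i + 1)) / (n + 1) := by
        rw [sum_div]; simp only [← pow_mul, mul_comm]
    _ ≤ q ^ (n + 1) / (1 - q ^ (n + 1)) / (n + 1) := by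
        gcongr ?_ / _; exact sum_range_pow_succ_le_s10 hr0 hr1 m
    _ ≤ q / ((n + 1) * (1 - q)) / (n + 1) := by
        gcongr ?_ / _; exact pow_succ_div_one_sub_pow_succ_le h0 h1 n
    _ = q / (1 - q) * (1 / ((n : ℝ) + 1) ^ 2) := by field_simp

lemma sum_range_neg_log_one_sub_pow_le {q : ℝ} (h0 : 0 ≤ q) (h1 : q < 1) (m : ℕ) :
    ∑ i ∈ range m, -log (1 - q ^ (i + 1)) ≤ q / (1 - q) * (π ^ 2 / 6) := by
  have hlog : ∀ i ∈ range m, HasSum (fun n : ℕ => (q ^ (i + 1)) ^ (n + 1) / (n + 1))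
      (-log (1 - q ^ (i + 1))) := fun i _ =>
    hasSum_pow_div_log_of_abs_lt_one <| by
      rw [abs_of_nonneg (pow_nonneg h0 _)]; exact pow_lt_one₀ h0 h1 i.succ_ne_zero
  exact hasSum_le (sum_range_pow_pow_div_le h0 h1 m) (hasSum_sum hlog)
    (hasSum_inv_succ_sq.mul_left _)

lemma exp_le_prod_range_one_sub_pow {q : ℝ} (h0 : 0 ≤ q) (h1 : q < 1) (m : ℕ) :
    exp (-(π ^ 2 / 6) * (q / (1 - q))) ≤ ∏ i ∈ range m, (1 - q ^ (i + 1)) := by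
  have hpos : ∀ i ∈ range m, 0 < 1 - q ^ (i + 1) := fun i _ =>
    sub_pos.mpr (pow_lt_one₀ h0 h1 i.succ_ne_zero)
  rw [← le_log_iff_exp_le (prod_pos hpos), log_prod fun i hi => (hpos i hi).ne']
  linarith [sum_range_neg_log_one_sub_pow_le h0 h1 m, sum_neg_distrib (s := range m)
    (fun i => log (1 - q ^ (i + 1)))]

lemma antitone_prod_range_one_sub_pow {q : ℝ} (h0 : 0 ≤ q) (h1 : q ≤ 1) :
    Antitone fun m : ℕ => ∏ i ∈ range m, (1 - q ^ (i + 1)) :=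
  antitone_nat_of_succ_le fun m => by
    rw [prod_range_succ]
    exact mul_le_of_le_one_right (prod_nonneg fun i _ => sub_nonneg.mpr (pow_le_one₀ h0 h1))
      (sub_le_self _ (pow_nonneg h0 _))

lemma Antitone.exists_tendsto_ge {f : ℕ → ℝ} (hf : Antitone f) {b : ℝ} (hb : ∀ n, b ≤ f n) :
    ∃ L, Tendsto f atTop (𝓝 L) ∧ b ≤ L :=
  ⟨⨅ n, f n, tendsto_atTop_ciInf hf ⟨b, Set.forall_mem_range.mpr hb⟩, le_ciInf hb⟩

/-- For `0 < q < 1` and `p = 1 - q`, the infinite product `∏_{i≥1} (1-q^i)^4` (the limit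
of its partial products) is at least `exp(-(2π²/3) · q/p)`. -/
theorem infinite_product_lower_bound (q p : ℝ) (h0 : 0 < q) (h1 : q < 1)
    (hp : p = 1 - q) :
    ∃ L : ℝ,
      Tendsto (fun m : ℕ => ∏ i ∈ Finset.range m, (1 - q ^ (i + 1)) ^ 4) atTop (nhds L) ∧
      Real.exp (-(2 * Real.pi ^ 2 / 3) * (q / p)) ≤ L := by
  subst hp
  obtain ⟨L, hL, hbound⟩ := (antitone_prod_range_one_sub_pow h0.le h1.le).exists_tendsto_ge
    (exp_le_prod_range_one_sub_pow h0.le h1)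
  refine ⟨L ^ 4, by simpa only [prod_pow] using hL.pow 4, ?_⟩
  calc exp (-(2 * π ^ 2 / 3) * (q / (1 - q))) = exp (-(π ^ 2 / 6) * (q / (1 - q))) ^ 4 := by
        rw [← exp_nat_mul]; ring_nf
    _ ≤ L ^ 4 := by gcongr
end

section
/- For every real q with 0 < q < 1 and p = 1 − q, writing V_odd = ∏_{i ≥ 1, i odd} (1 − q^i)^4, V_even = ∏_{i ≥ 1, i even} (1 − q^i)^4 and V_all = ∏_{i=1}^∞ (1 − q^i)^4, one has V_odd < V_even, V_odd > p⁴ · V_even, and consequently V_odd ≥ p² · √(V_all). -/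
open Filter

private lemma prod_one_sub_ge (a : ℕ → ℝ) (h0 : ∀ j, 0 ≤ a j) (h1 : ∀ j, a j ≤ 1) (m : ℕ) :
    1 - ∑ j ∈ Finset.range m, a j ≤ ∏ j ∈ Finset.range m, (1 - a j) := by
  induction m with
  | zero => simp
  | succ m ih =>
    rw [Finset.prod_range_succ, Finset.sum_range_succ]
    have hs : 0 ≤ ∑ j ∈ Finset.range m, a j := Finset.sum_nonneg fun j _ => h0 j
    have h1m : (0:ℝ) ≤ 1 - a m := by linarith [h1 m]
    nlinarith [mul_le_mul_of_nonneg_right ih h1m, h0 m]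

private lemma aux_geom_le (r : ℝ) (hr0 : 0 ≤ r) (hr1 : r < 1) (n : ℕ) :
    ∑ i ∈ Finset.range n, r ^ i ≤ (1 - r)⁻¹ := by
  rw [geom_sum_eq hr1.ne, div_le_iff_of_neg (by linarith : r - 1 < 0)]
  have h : (1 - r)⁻¹ * (r - 1) = -1 := by
    rw [inv_mul_eq_div, div_eq_iff (by linarith : (1:ℝ) - r ≠ 0)]; ring
  rw [h]
  nlinarith [pow_nonneg hr0 n]

/-- For `0 < q < 1` and `p = 1 - q`, writing `V_odd = ∏_{i odd} (1-q^i)^4`,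
`V_even = ∏_{i even} (1-q^i)^4` and `V_all = ∏_{i≥1} (1-q^i)^4` (each being the limit of
its partial products, odd positive integers being enumerated as `2j+1` and even ones as
`2j+2`), one has `V_odd < V_even`, `V_odd > p⁴ V_even` and `V_odd ≥ p² √V_all`. -/
theorem odd_even_product_comparison (q p : ℝ) (h0 : 0 < q) (h1 : q < 1)
    (hp : p = 1 - q) (Vodd Veven Vall : ℝ)
    (hodd : Tendsto (fun m : ℕ => ∏ j ∈ Finset.range m, (1 - q ^ (2 * j + 1)) ^ 4)
      atTop (nhds Vodd))
    (heven : Tendsto (fun m : ℕ => ∏ j ∈ Finset.range m, (1 - q ^ (2 * j + 2)) ^ 4)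
      atTop (nhds Veven))
    (hall : Tendsto (fun m : ℕ => ∏ i ∈ Finset.range m, (1 - q ^ (i + 1)) ^ 4)
      atTop (nhds Vall)) :
    Vodd < Veven ∧ p ^ 4 * Veven < Vodd ∧ p ^ 2 * Real.sqrt Vall ≤ Vodd := by
  set fo : ℕ → ℝ := fun m => ∏ j ∈ Finset.range m, (1 - q ^ (2 * j + 1)) ^ 4 with hfo
  set fe : ℕ → ℝ := fun m => ∏ j ∈ Finset.range m, (1 - q ^ (2 * j + 2)) ^ 4 with hfe
  set fa : ℕ → ℝ := fun m => ∏ i ∈ Finset.range m, (1 - q ^ (i + 1)) ^ 4 with hfa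
  -- basic facts
  have hqpos : ∀ i : ℕ, 0 < q ^ i := fun i => pow_pos h0 i
  have hterm : ∀ i : ℕ, i ≠ 0 → 0 < 1 - q ^ i := by
    intro i hi
    have := pow_lt_one₀ h0.le h1 hi
    linarith
  have hterm1 : ∀ i : ℕ, 1 - q ^ i ≤ 1 := fun i => by linarith [hqpos i]
  have hq2 : 0 < 1 - q ^ 2 := hterm 2 (by norm_num)
  -- Step 1 : Veven > 0
  have hVepos : 0 < Veven := by
    obtain ⟨N, hN⟩ : ∃ N : ℕ, q ^ N ≤ (1 - q ^ 2) / 8 := by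
      have ht := tendsto_pow_atTop_nhds_zero_of_lt_one h0.le h1
      obtain ⟨N, hN⟩ := (ht.eventually (gt_mem_nhds (show (0:ℝ) < (1 - q ^ 2) / 8
        by positivity))).exists
      exact ⟨N, hN.le⟩
    have hfeN : 0 < fe N := Finset.prod_pos fun j _ =>
      pow_pos (hterm (2 * j + 2) (by omega)) 4
    have key : ∀ k : ℕ, fe N / 2 ≤ fe (N + k) := by
      intro k
      have hsplit : fe (N + k)
          = fe N * ∏ j ∈ Finset.range k, (1 - q ^ (2 * (N + j) + 2)) ^ 4 :=
        Finset.prod_range_add _ N k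
      set a : ℕ → ℝ := fun j => 1 - (1 - q ^ (2 * (N + j) + 2)) ^ 4 with ha
      have ha0 : ∀ j, 0 ≤ a j := by
        intro j
        have h1' := hterm (2 * (N + j) + 2) (by omega)
        have h2' := hterm1 (2 * (N + j) + 2)
        have : (1 - q ^ (2 * (N + j) + 2)) ^ 4 ≤ 1 := by
          calc (1 - q ^ (2 * (N + j) + 2)) ^ 4 ≤ 1 ^ 4 :=
                pow_le_pow_left₀ h1'.le h2' 4
            _ = 1 := one_pow 4
        simp only [ha]; linarith
      have ha1 : ∀ j, a j ≤ 1 := by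
        intro j
        have h1' := hterm (2 * (N + j) + 2) (by omega)
        have : 0 ≤ (1 - q ^ (2 * (N + j) + 2)) ^ 4 := by positivity
        simp only [ha]; linarith
      have haub : ∀ j, a j ≤ 4 * (q ^ N * (q ^ 2) ^ j) := by
        intro j
        have hx0 : 0 ≤ q ^ (2 * (N + j) + 2) := (hqpos _).le
        have hx1 : q ^ (2 * (N + j) + 2) ≤ 1 := by
          have := pow_lt_one₀ h0.le h1 (n := 2 * (N + j) + 2) (by omega)
          linarith
        have hb : a j ≤ 4 * q ^ (2 * (N + j) + 2) := by
          simp only [ha]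
          nlinarith [sq_nonneg (q ^ (2 * (N + j) + 2) * (q ^ (2 * (N + j) + 2) - 2)),
            sq_nonneg (q ^ (2 * (N + j) + 2))]
        have hmono : q ^ (2 * (N + j) + 2) ≤ q ^ N * (q ^ 2) ^ j := by
          have : q ^ (2 * (N + j) + 2) ≤ q ^ (N + 2 * j) :=
            pow_le_pow_of_le_one h0.le h1.le (by omega)
          calc q ^ (2 * (N + j) + 2) ≤ q ^ (N + 2 * j) := this
            _ = q ^ N * (q ^ 2) ^ j := by rw [pow_add, ← pow_mul, Nat.mul_comm]
        linarith
      have hsum : ∑ j ∈ Finset.range k, a j ≤ 1 / 2 := by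
        have h1' : ∑ j ∈ Finset.range k, a j
            ≤ ∑ j ∈ Finset.range k, 4 * (q ^ N * (q ^ 2) ^ j) :=
          Finset.sum_le_sum fun j _ => haub j
        have h2' : ∑ j ∈ Finset.range k, 4 * (q ^ N * (q ^ 2) ^ j)
            = 4 * q ^ N * ∑ j ∈ Finset.range k, (q ^ 2) ^ j := by
          rw [Finset.mul_sum]; exact Finset.sum_congr rfl fun j _ => by ring
        have h3' : ∑ j ∈ Finset.range k, (q ^ 2) ^ j ≤ (1 - q ^ 2)⁻¹ :=
          aux_geom_le _ (by positivity) (by nlinarith) k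
        have h4' : 4 * q ^ N * ∑ j ∈ Finset.range k, (q ^ 2) ^ j
            ≤ 4 * q ^ N * (1 - q ^ 2)⁻¹ := by
          have : (0:ℝ) ≤ 4 * q ^ N := by positivity
          exact mul_le_mul_of_nonneg_left h3' this
        have h5' : 4 * q ^ N * (1 - q ^ 2)⁻¹ ≤ 1 / 2 := by
          rw [mul_inv_le_iff₀ hq2]
          nlinarith
        linarith
      have hprod : (1:ℝ) / 2 ≤ ∏ j ∈ Finset.range k, (1 - q ^ (2 * (N + j) + 2)) ^ 4 := by
        have := prod_one_sub_ge a ha0 ha1 k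
        have heq : ∏ j ∈ Finset.range k, (1 - a j)
            = ∏ j ∈ Finset.range k, (1 - q ^ (2 * (N + j) + 2)) ^ 4 := by
          apply Finset.prod_congr rfl
          intro j _
          simp [ha]
        rw [heq] at this
        linarith
      rw [hsplit]
      calc fe N / 2 = fe N * (1 / 2) := by ring
        _ ≤ fe N * ∏ j ∈ Finset.range k, (1 - q ^ (2 * (N + j) + 2)) ^ 4 :=
            mul_le_mul_of_nonneg_left hprod hfeN.le
    have : fe N / 2 ≤ Veven := by
      apply ge_of_tendsto heven
      filter_upwards [eventually_ge_atTop N] with m hm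
      have : fe N / 2 ≤ fe (N + (m - N)) := key (m - N)
      rwa [Nat.add_sub_cancel' hm] at this
    linarith [half_pos hfeN]
  -- Step 2 : (1-q^2)^4 * Vodd ≤ (1-q)^4 * Veven
  have hq1 : 0 < 1 - q := by linarith
  have hstep2 : (1 - q ^ 2) ^ 4 * Vodd ≤ (1 - q) ^ 4 * Veven := by
    have hptwise : ∀ m : ℕ, (1 - q ^ 2) ^ 4 * fo (m + 1) ≤ (1 - q) ^ 4 * fe (m + 1) := by
      intro m
      have ho : fo (m + 1)
          = (∏ j ∈ Finset.range m, (1 - q ^ (2 * (j + 1) + 1)) ^ 4) * (1 - q ^ 1) ^ 4 :=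
        Finset.prod_range_succ' _ m
      have he : fe (m + 1)
          = (∏ j ∈ Finset.range m, (1 - q ^ (2 * (j + 1) + 2)) ^ 4) * (1 - q ^ 2) ^ 4 :=
        Finset.prod_range_succ' _ m
      have hle : ∏ j ∈ Finset.range m, (1 - q ^ (2 * (j + 1) + 1)) ^ 4
          ≤ ∏ j ∈ Finset.range m, (1 - q ^ (2 * (j + 1) + 2)) ^ 4 := by
        apply Finset.prod_le_prod
        · intro j _; positivity
        · intro j _
          apply pow_le_pow_left₀ (hterm _ (by omega)).le
          have : q ^ (2 * (j + 1) + 2) ≤ q ^ (2 * (j + 1) + 1) :=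
            pow_le_pow_of_le_one h0.le h1.le (by omega)
          linarith
      rw [ho, he, pow_one]
      have c1 : (0:ℝ) ≤ (1 - q ^ 2) ^ 4 * (1 - q) ^ 4 := by positivity
      nlinarith [mul_le_mul_of_nonneg_left hle c1]
    exact le_of_tendsto_of_tendsto'
      ((hodd.comp (tendsto_add_atTop_nat 1)).const_mul _)
      ((heven.comp (tendsto_add_atTop_nat 1)).const_mul _)
      hptwise
  -- Step 3 : (1-q)^4 * (1-q^3)^4 * Veven ≤ (1-q^2)^4 * Vodd
  have hq3 : 0 < 1 - q ^ 3 := hterm 3 (by norm_num)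
  have hstep3 : (1 - q) ^ 4 * (1 - q ^ 3) ^ 4 * Veven ≤ (1 - q ^ 2) ^ 4 * Vodd := by
    have hptwise : ∀ m : ℕ,
        (1 - q) ^ 4 * (1 - q ^ 3) ^ 4 * fe (m + 1) ≤ (1 - q ^ 2) ^ 4 * fo (m + 2) := by
      intro m
      have ho : fo (m + 2)
          = ((∏ j ∈ Finset.range m, (1 - q ^ (2 * (j + 1 + 1) + 1)) ^ 4)
              * (1 - q ^ (2 * (0 + 1) + 1)) ^ 4) * (1 - q ^ (2 * 0 + 1)) ^ 4 := by
        have hh1 : fo (m + 2)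
            = (∏ j ∈ Finset.range (m + 1), (1 - q ^ (2 * (j + 1) + 1)) ^ 4)
                * (1 - q ^ (2 * 0 + 1)) ^ 4 := Finset.prod_range_succ' _ (m + 1)
        have hh2 : (∏ j ∈ Finset.range (m + 1), (1 - q ^ (2 * (j + 1) + 1)) ^ 4)
            = (∏ j ∈ Finset.range m, (1 - q ^ (2 * (j + 1 + 1) + 1)) ^ 4)
                * (1 - q ^ (2 * (0 + 1) + 1)) ^ 4 := Finset.prod_range_succ' _ m
        rw [hh1, hh2]
      have he : fe (m + 1)
          = (∏ j ∈ Finset.range m, (1 - q ^ (2 * (j + 1) + 2)) ^ 4) * (1 - q ^ 2) ^ 4 :=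
        Finset.prod_range_succ' _ m
      have hle : ∏ j ∈ Finset.range m, (1 - q ^ (2 * (j + 1) + 2)) ^ 4
          ≤ ∏ j ∈ Finset.range m, (1 - q ^ (2 * (j + 1 + 1) + 1)) ^ 4 := by
        apply Finset.prod_le_prod
        · intro j _; positivity
        · intro j _
          apply pow_le_pow_left₀ (hterm _ (by omega)).le
          have : q ^ (2 * (j + 1 + 1) + 1) ≤ q ^ (2 * (j + 1) + 2) :=
            pow_le_pow_of_le_one h0.le h1.le (by omega)
          linarith
      rw [ho, he]
      norm_num
      have c1 : (0:ℝ) ≤ (1 - q) ^ 4 * (1 - q ^ 3) ^ 4 * (1 - q ^ 2) ^ 4 := by positivity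
      nlinarith [mul_le_mul_of_nonneg_left hle c1]
    exact le_of_tendsto_of_tendsto'
      ((heven.comp (tendsto_add_atTop_nat 1)).const_mul _)
      ((hodd.comp (tendsto_add_atTop_nat 2)).const_mul _)
      hptwise
  -- derive the two strict inequalities
  have hpq2 : (1 - q) < (1 - q ^ 2) := by nlinarith
  have hpow14 : (1 - q) ^ 4 < (1 - q ^ 2) ^ 4 := by
    apply pow_lt_pow_left₀ hpq2 hq1.le (by norm_num)
  have hq24pos : (0:ℝ) < (1 - q ^ 2) ^ 4 := by positivity
  have hlt1 : Vodd < Veven := by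
    have h' : (1 - q ^ 2) ^ 4 * Vodd < (1 - q ^ 2) ^ 4 * Veven := by
      calc (1 - q ^ 2) ^ 4 * Vodd ≤ (1 - q) ^ 4 * Veven := hstep2
        _ < (1 - q ^ 2) ^ 4 * Veven := by
            exact mul_lt_mul_of_pos_right hpow14 hVepos
    exact lt_of_mul_lt_mul_left h' hq24pos.le
  have hq23 : (1 - q ^ 2) < (1 - q ^ 3) := by nlinarith
  have hlt2 : p ^ 4 * Veven < Vodd := by
    have h' : (1 - q ^ 2) ^ 4 * (p ^ 4 * Veven) < (1 - q ^ 2) ^ 4 * Vodd := by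
      have hc : (1 - q) ^ 4 * (1 - q ^ 2) ^ 4 < (1 - q) ^ 4 * (1 - q ^ 3) ^ 4 := by
        have := pow_lt_pow_left₀ hq23 hq2.le (n := 4) (by norm_num)
        have hpos : (0:ℝ) < (1 - q) ^ 4 := by positivity
        exact mul_lt_mul_of_pos_left this hpos
      calc (1 - q ^ 2) ^ 4 * (p ^ 4 * Veven)
          = ((1 - q) ^ 4 * (1 - q ^ 2) ^ 4) * Veven := by rw [hp]; ring
        _ < ((1 - q) ^ 4 * (1 - q ^ 3) ^ 4) * Veven :=
            mul_lt_mul_of_pos_right hc hVepos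
        _ ≤ (1 - q ^ 2) ^ 4 * Vodd := hstep3
    exact lt_of_mul_lt_mul_left h' hq24pos.le
  have hVopos : 0 < Vodd := by
    have : 0 < p ^ 4 * Veven := by
      have : 0 < p := by rw [hp]; linarith
      positivity
    linarith
  -- Step 4 : Vall = Vodd * Veven
  have hVall : Vall = Vodd * Veven := by
    have hdouble : ∀ m : ℕ, fa (2 * m) = fo m * fe m := by
      intro m
      induction m with
      | zero => simp [hfa, hfo, hfe]
      | succ m ih =>
        have h2m : 2 * (m + 1) = (2 * m + 1) + 1 := by ring
        simp only [hfa, hfo, hfe] at ih ⊢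
        rw [h2m, Finset.prod_range_succ, Finset.prod_range_succ, ih,
          Finset.prod_range_succ, Finset.prod_range_succ,
          show 2 * m + 1 + 1 = 2 * m + 2 by omega]
        ring
    have hsm : StrictMono (fun m : ℕ => 2 * m) := fun a b h => by dsimp only; omega
    have t1 : Tendsto (fun m : ℕ => fa (2 * m)) atTop (nhds Vall) :=
      hall.comp hsm.tendsto_atTop
    have t2 : Tendsto (fun m : ℕ => fo m * fe m) atTop (nhds (Vodd * Veven)) :=
      hodd.mul heven
    have : Tendsto (fun m : ℕ => fa (2 * m)) atTop (nhds (Vodd * Veven)) := by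
      simpa only [hdouble] using t2
    exact tendsto_nhds_unique t1 this
  -- Step 5 : conclude
  refine ⟨hlt1, hlt2, ?_⟩
  have hppos : (0:ℝ) < p := by rw [hp]; linarith
  have hkey : p ^ 4 * Vall ≤ Vodd ^ 2 := by
    rw [hVall]
    calc p ^ 4 * (Vodd * Veven) = Vodd * (p ^ 4 * Veven) := by ring
      _ ≤ Vodd * Vodd := mul_le_mul_of_nonneg_left hlt2.le hVopos.le
      _ = Vodd ^ 2 := by ring
  have : p ^ 2 * Real.sqrt Vall = Real.sqrt (p ^ 4 * Vall) := by
    rw [Real.sqrt_mul (by positivity) Vall]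
    congr 1
    rw [show p ^ 4 = (p ^ 2) ^ 2 by ring, Real.sqrt_sq (by positivity)]
  rw [this]
  calc Real.sqrt (p ^ 4 * Vall) ≤ Real.sqrt (Vodd ^ 2) := Real.sqrt_le_sqrt hkey
    _ = Vodd := Real.sqrt_sq hVopos.le
end
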